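/- arXiv:0908.4585 — 6 statements merged into one kernel-verified Lean document; each statement's English description precedes it below -/
import Mathlib

section
/- For 0 < a ≤ ℓ/2, the bilinear form ⟨ζ,η⟩_a = ∫∫ (a - d(x,y))₊ dζ(x) dη(y) on signed counting measures on the circle S is symmetric and positive semidefinite; in particular ⟨ζ,ζ⟩_a ≥ 0 for every finite signed measure ζ on S. -/
/-!
For `r ≤ ℓ / 4` the open arcs of radius `r` about two points `x`, `y` of the circle meet in an arc
of length `(2r - d(x,y))₊`: the arcs cannot also overlap on the far side of the circle. With
`r = a / 2` this gives `⟨ζ,ζ⟩ₐ = ∫ (∑ₓ ζ(x) 1_{B(x, a/2)})² ≥ 0`.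
-/

open Finset

/-- The bilinear form `⟨ζ,η⟩ₐ = ∑∑ ζ(x) η(y) (a - d(x,y))₊` on finite signed combinations of
Dirac measures on the circle of circumference `ℓ`. -/
noncomputable def ipa (ℓ : ℝ) (a : ℝ) (ζ η : AddCircle ℓ →₀ ℝ) : ℝ :=
  ∑ x ∈ ζ.support, ∑ y ∈ η.support, ζ x * η y * max (a - dist x y) 0

open MeasureTheory Metric

theorem MeasureTheory.sum_sum_mul_measureReal_inter_nonneg {α ι : Type*} [MeasurableSpace α]
    (μ : Measure α) [IsFiniteMeasure μ] (s : Finset ι) (c : ι → ℝ) {A : ι → Set α}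
    (hA : ∀ i, MeasurableSet (A i)) :
    0 ≤ ∑ i ∈ s, ∑ j ∈ s, c i * c j * μ.real (A i ∩ A j) := by
  have hint : ∀ i j, Integrable (fun u => c i * c j * (A i ∩ A j).indicator (1 : α → ℝ) u) μ :=
    fun i j => ((integrable_const 1).indicator ((hA i).inter (hA j))).const_mul _
  calc 0 ≤ ∫ u, (∑ i ∈ s, c i * (A i).indicator 1 u) ^ 2 ∂μ :=
        integral_nonneg fun u => sq_nonneg _
    _ = ∫ u, ∑ i ∈ s, ∑ j ∈ s, c i * c j * (A i ∩ A j).indicator 1 u ∂μ := by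
        congr 1 with u
        rw [sq, sum_mul_sum]
        refine sum_congr rfl fun i _ => sum_congr rfl fun j _ => ?_
        rw [Set.inter_indicator_one, Pi.mul_apply]
        ring
    _ = ∑ i ∈ s, ∑ j ∈ s, ∫ u, c i * c j * (A i ∩ A j).indicator 1 u ∂μ := by
        rw [integral_finsetSum s fun i _ => integrable_finsetSum s fun j _ => hint i j]
        exact sum_congr rfl fun i _ => integral_finsetSum s fun j _ => hint i j
    _ = ∑ i ∈ s, ∑ j ∈ s, c i * c j * μ.real (A i ∩ A j) := by
        simp_rw [integral_const_mul, integral_indicator_one ((hA _).inter (hA _))]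

namespace AddCircle

theorem norm_coe_lt_iff_abs_lt {ℓ x r : ℝ} (h : |x| + r ≤ ℓ) :
    ‖(x : AddCircle ℓ)‖ < r ↔ |x| < r := by
  refine ⟨fun hlt => ?_, fun hlt => QuotientAddGroup.norm_mk_le_norm.trans_lt hlt⟩
  rw [norm_eq] at hlt
  rcases eq_or_ne (round (ℓ⁻¹ * x)) 0 with hn | hn
  · simpa [hn] using hlt
  have hℓ : 0 ≤ ℓ := by linarith [abs_nonneg x, (abs_nonneg _).trans_lt hlt]
  have hnℓ : ℓ ≤ |round (ℓ⁻¹ * x) * ℓ| := by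
    rw [abs_mul, abs_of_nonneg hℓ]
    exact le_mul_of_one_le_left hℓ (by exact_mod_cast Int.one_le_abs hn)
  have := abs_sub_abs_le_abs_sub (round (ℓ⁻¹ * x) * ℓ) x
  rw [abs_sub_comm] at this
  linarith

variable {ℓ : ℝ} [Fact (0 < ℓ)]

theorem measureReal_ball_inter_ball {r : ℝ} (hr : r ≤ ℓ / 4) (x y : AddCircle ℓ) :
    volume.real (ball x r ∩ ball y r) = max (2 * r - dist x y) 0 := by
  have hℓ : 0 < ℓ := Fact.out
  obtain ⟨p, rfl⟩ := QuotientAddGroup.mk_surjective x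
  obtain ⟨w, hw, rfl⟩ :
      ∃ w ∈ Set.Ioc (-(ℓ / 2)) (-(ℓ / 2) + ℓ), ((p + w : ℝ) : AddCircle ℓ) = y :=
    ⟨equivIoc ℓ _ (y - p), (equivIoc ℓ _ (y - p)).2, by rw [coe_add, coe_equivIoc]; abel⟩
  have hw' : |w| ≤ ℓ / 2 := abs_le.2 ⟨by linarith [hw.1], by linarith [hw.2]⟩
  have hdist : dist (p : AddCircle ℓ) ↑(p + w) = |w| := by
    rw [dist_eq_norm, ← coe_sub, show p - (p + w) = -w by ring,
      (norm_coe_eq_abs_iff ℓ hℓ.ne').2 (by rwa [abs_neg, abs_of_pos hℓ]), abs_neg]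
  have hpre : ((↑) : ℝ → AddCircle ℓ) ⁻¹' (ball ↑p r ∩ ball ↑(p + w) r) ∩
      Set.Ioc (p - ℓ / 2) (p - ℓ / 2 + ℓ) =
        Set.Ioo (max (p - r) (p + w - r)) (min (p + r) (p + w + r)) := by
    ext u
    simp only [Set.mem_inter_iff, Set.mem_preimage, mem_ball, dist_eq_norm, ← coe_sub,
      Set.mem_Ioc, Set.mem_Ioo, max_lt_iff, lt_min_iff]
    constructor
    · rintro ⟨⟨hup, huw⟩, hu₁, hu₂⟩
      have hup_le : |u - p| ≤ ℓ / 2 := abs_le.2 ⟨by linarith, by linarith⟩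
      have hup' : |u - p| < r := (norm_coe_lt_iff_abs_lt (by linarith)).1 hup
      have htri : |u - (p + w)| ≤ |u - p| + |w| := by rw [← sub_sub]; exact abs_sub _ _
      have huw' : |u - (p + w)| < r := (norm_coe_lt_iff_abs_lt (by linarith)).1 huw
      rw [abs_lt] at hup' huw'
      exact ⟨⟨by linarith, by linarith⟩, by linarith, by linarith⟩
    · rintro ⟨⟨hu₁, hu₂⟩, hu₃, hu₄⟩
      have hup : |u - p| < r := abs_lt.2 ⟨by linarith, by linarith⟩
      have huw : |u - (p + w)| < r := abs_lt.2 ⟨by linarith, by linarith⟩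
      exact ⟨⟨(norm_coe_lt_iff_abs_lt (by linarith)).2 hup,
        (norm_coe_lt_iff_abs_lt (by linarith)).2 huw⟩, by linarith, by linarith⟩
  rw [measureReal_def, add_projection_respects_measure ℓ (p - ℓ / 2)
    (measurableSet_ball.inter measurableSet_ball), hpre, Real.volume_Ioo, ENNReal.toReal_ofReal',
    hdist, min_add_add_right, max_sub_sub_right]
  have hwidth := max_sub_min_eq_abs' p (p + w)
  rw [sub_add_cancel_left, abs_neg] at hwidth
  congr 1
  linarith

end AddCircle

theorem ipa_comm (ℓ a : ℝ) (ζ η : AddCircle ℓ →₀ ℝ) : ipa ℓ a ζ η = ipa ℓ a η ζ := by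
  rw [ipa, ipa, sum_comm]
  refine sum_congr rfl fun y _ => sum_congr rfl fun x _ => ?_
  rw [dist_comm]
  ring

theorem ipa_self_nonneg (ℓ : ℝ) [Fact (0 < ℓ)] {a : ℝ} (haℓ : a ≤ ℓ / 2)
    (ζ : AddCircle ℓ →₀ ℝ) : 0 ≤ ipa ℓ a ζ ζ := by
  have hball : ∀ x y : AddCircle ℓ,
      max (a - dist x y) 0 = volume.real (ball x (a / 2) ∩ ball y (a / 2)) := by
    intro x y
    rw [AddCircle.measureReal_ball_inter_ball (by linarith)]
    ring_nf
  simp only [ipa, hball]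
  exact sum_sum_mul_measureReal_inter_nonneg volume ζ.support ζ fun _ => measurableSet_ball

theorem ipa_symm_and_posSemidef_general (ℓ : ℝ) [Fact (0 < ℓ)] (a : ℝ)
    (haℓ : a ≤ ℓ / 2) :
    (∀ ζ η : AddCircle ℓ →₀ ℝ, ipa ℓ a ζ η = ipa ℓ a η ζ) ∧
    (∀ ζ : AddCircle ℓ →₀ ℝ, 0 ≤ ipa ℓ a ζ ζ) :=
  ⟨ipa_comm ℓ a, ipa_self_nonneg ℓ haℓ⟩

/-- For `0 < a ≤ ℓ/2`, the form `⟨·,·⟩ₐ` is symmetric and positive semidefinite. -/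
theorem ipa_symm_and_posSemidef (ℓ : ℝ) [Fact (0 < ℓ)] (a : ℝ) (ha : 0 < a)
    (haℓ : a ≤ ℓ / 2) :
    (∀ ζ η : AddCircle ℓ →₀ ℝ, ipa ℓ a ζ η = ipa ℓ a η ζ) ∧
    (∀ ζ : AddCircle ℓ →₀ ℝ, 0 ≤ ipa ℓ a ζ ζ) :=
  ipa_symm_and_posSemidef_general ℓ a haℓ
end

section
/- Let S be the circle of circumference ℓ with uniform probability measure m, let 0 < a ≤ ℓ/2, let x ∈ S, and let ζ be a finite counting measure on S having atoms at x-a, x, and x+a. Then ∑_{y ∈ supp ζ} (a - d(x,y))₊ · ℓ · m(Γ_ζ(y)) = a², where Γ_ζ(y) = {z ∈ S : d(y,z) < d(y',z) for all other atoms y' of ζ} is the open Voronoi cell of y. -/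
/-!
Write `x = ↑x₀` and cut the circle open at the site `x - a`, lifting every point to
`(x₀ - a, x₀ - a + ℓ]`. A site within distance `a` of `x` lifts to some `u ∈ (x₀ - a, x₀ + a)`,
and its Voronoi cell is the arc between the midpoints of `u` and its two neighbouring lifts
`u⁻ < u < u⁺`, of length `(u⁺ - u⁻) / 2`. The sum is therefore `∑ f(u) (u⁺ - u⁻) / 2` over the
lifts in `[x₀ - a, x₀ + a]`, with `f` the tent of half-width `a` centred at `x₀`: the trapezoidal
rule for `∫ f = a²`. It is exact because the kinks `x₀ - a, x₀, x₀ + a` of `f` are nodes, and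
inserting a node at which `f` is affine between its neighbours does not change the sum.
-/

open Finset MeasureTheory

/-- The (open) Voronoi cell of `y` with respect to the finite set of sites `F` on the circle. -/
def voronoi (ℓ : ℝ) (F : Finset (AddCircle ℓ)) (y : AddCircle ℓ) : Set (AddCircle ℓ) :=
  {z | ∀ y' ∈ F, y' ≠ y → dist z y < dist z y'}

section Neighbors

variable {α : Type*} [LinearOrder α] [Inhabited α] {V : Finset α} {s s₀ t : α}

-- Both are `default` when `s` has no neighbour in `V` on that side.
noncomputable def lowerNeighbor (V : Finset α) (s : α) : α :=
  ((V.filter (· < s)).max).unbotD default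

noncomputable def upperNeighbor (V : Finset α) (s : α) : α :=
  ((V.filter (s < ·)).min).untopD default

theorem isGreatest_lowerNeighbor (h : ∃ t ∈ V, t < s) :
    IsGreatest {t | t ∈ V ∧ t < s} (lowerNeighbor V s) := by
  have hne : (V.filter (· < s)).Nonempty := by simpa [Finset.Nonempty] using h
  rw [lowerNeighbor, ← Finset.coe_max' hne, WithBot.unbotD_coe]
  simpa using Finset.isGreatest_max' _ hne

theorem isLeast_upperNeighbor (h : ∃ t ∈ V, s < t) :
    IsLeast {t | t ∈ V ∧ s < t} (upperNeighbor V s) := by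
  have hne : (V.filter (s < ·)).Nonempty := by simpa [Finset.Nonempty] using h
  rw [upperNeighbor, ← Finset.coe_min' hne, WithTop.untopD_coe]
  simpa using Finset.isLeast_min' _ hne

theorem lowerNeighbor_eq (h : IsGreatest {t | t ∈ V ∧ t < s} t) : lowerNeighbor V s = t :=
  (isGreatest_lowerNeighbor ⟨t, h.1⟩).unique h

theorem upperNeighbor_eq (h : IsLeast {t | t ∈ V ∧ s < t} t) : upperNeighbor V s = t :=
  (isLeast_upperNeighbor ⟨t, h.1⟩).unique h

theorem eq_of_mem_Ioo_neighbors (ht : t ∈ V)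
    (h : t ∈ Set.Ioo (lowerNeighbor V s) (upperNeighbor V s)) : t = s := by
  by_contra hts
  rcases lt_or_gt_of_ne hts with hlt | hgt
  · exact h.1.not_ge ((isGreatest_lowerNeighbor ⟨t, ht, hlt⟩).2 ⟨ht, hlt⟩)
  · exact h.2.not_ge ((isLeast_upperNeighbor ⟨t, ht, hgt⟩).2 ⟨ht, hgt⟩)

theorem lowerNeighbor_insert_of_le (h : s ≤ s₀) :
    lowerNeighbor (insert s₀ V) s = lowerNeighbor V s := by
  simp [lowerNeighbor, Finset.filter_insert, not_lt.2 h]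

theorem upperNeighbor_insert_of_le (h : s₀ ≤ s) :
    upperNeighbor (insert s₀ V) s = upperNeighbor V s := by
  simp [upperNeighbor, Finset.filter_insert, not_lt.2 h]

theorem lowerNeighbor_insert_of_lt (h : s₀ < s) (hV : ∃ t ∈ V, t < s) :
    lowerNeighbor (insert s₀ V) s = max s₀ (lowerNeighbor V s) := by
  have hne : (V.filter (· < s)).Nonempty := by simpa [Finset.Nonempty] using hV
  rw [lowerNeighbor, lowerNeighbor, Finset.filter_insert, if_pos h, Finset.max_insert,
    ← Finset.coe_max' hne, ← WithBot.coe_max, WithBot.unbotD_coe, WithBot.unbotD_coe]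

theorem upperNeighbor_insert_of_lt (h : s < s₀) (hV : ∃ t ∈ V, s < t) :
    upperNeighbor (insert s₀ V) s = min s₀ (upperNeighbor V s) := by
  have hne : (V.filter (s < ·)).Nonempty := by simpa [Finset.Nonempty] using hV
  rw [upperNeighbor, upperNeighbor, Finset.filter_insert, if_pos h, Finset.min_insert,
    ← Finset.coe_min' hne, ← WithTop.coe_min, WithTop.untopD_coe, WithTop.untopD_coe]

theorem upperNeighbor_lowerNeighbor (hs₀ : s₀ ∉ V) (hp : ∃ t ∈ V, t < s₀)
    (hn : ∃ t ∈ V, s₀ < t) : upperNeighbor V (lowerNeighbor V s₀) = upperNeighbor V s₀ := by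
  have hpl := isGreatest_lowerNeighbor hp
  have hnl := isLeast_upperNeighbor hn
  refine upperNeighbor_eq ⟨⟨hnl.1.1, hpl.1.2.trans hnl.1.2⟩, fun t ⟨ht, hpt⟩ => ?_⟩
  by_contra! htn
  exact hs₀ (eq_of_mem_Ioo_neighbors ht ⟨hpt, htn⟩ ▸ ht)

theorem lowerNeighbor_upperNeighbor (hs₀ : s₀ ∉ V) (hp : ∃ t ∈ V, t < s₀)
    (hn : ∃ t ∈ V, s₀ < t) : lowerNeighbor V (upperNeighbor V s₀) = lowerNeighbor V s₀ := by
  have hpl := isGreatest_lowerNeighbor hp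
  have hnl := isLeast_upperNeighbor hn
  refine lowerNeighbor_eq ⟨⟨hpl.1.1, hpl.1.2.trans hnl.1.2⟩, fun t ⟨ht, htn⟩ => ?_⟩
  by_contra! hpt
  exact hs₀ (eq_of_mem_Ioo_neighbors ht ⟨hpt, htn⟩ ▸ ht)

end Neighbors

section Trapezoid

noncomputable def neighborGap (V : Finset ℝ) (s : ℝ) : ℝ :=
  upperNeighbor V s - lowerNeighbor V s

variable {V : Finset ℝ} {s s₀ : ℝ}

theorem neighborGap_insert (hs : s ∈ V) (hs₀ : s₀ ∉ V)
    (hp : ∃ t ∈ V, t < s₀) (hn : ∃ t ∈ V, s₀ < t) :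
    neighborGap (insert s₀ V) s =
      neighborGap V s
        + (if s = lowerNeighbor V s₀ then s₀ - upperNeighbor V s₀ else 0)
        + (if s = upperNeighbor V s₀ then lowerNeighbor V s₀ - s₀ else 0) := by
  obtain ⟨⟨hpV, hps₀⟩, hpmax⟩ := isGreatest_lowerNeighbor hp
  obtain ⟨⟨hnV, hs₀n⟩, hnmin⟩ := isLeast_upperNeighbor hn
  unfold neighborGap
  rcases lt_or_gt_of_ne (show s ≠ s₀ by rintro rfl; exact hs₀ hs) with hlt | hgt
  · have hsp : s ≤ lowerNeighbor V s₀ := hpmax ⟨hs, hlt⟩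
    rw [lowerNeighbor_insert_of_le hlt.le, upperNeighbor_insert_of_lt hlt ⟨_, hnV, hlt.trans hs₀n⟩,
      if_neg (hsp.trans_lt (hps₀.trans hs₀n)).ne]
    rcases hsp.eq_or_lt with rfl | hsp
    · rw [if_pos rfl, upperNeighbor_lowerNeighbor hs₀ hp hn, min_eq_left hs₀n.le]
      ring
    · have : upperNeighbor V s ≤ lowerNeighbor V s₀ :=
        (isLeast_upperNeighbor ⟨_, hpV, hsp⟩).2 ⟨hpV, hsp⟩
      rw [if_neg hsp.ne, min_eq_right (this.trans hps₀.le)]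
      ring
  · have hns : upperNeighbor V s₀ ≤ s := hnmin ⟨hs, hgt⟩
    rw [upperNeighbor_insert_of_le hgt.le, lowerNeighbor_insert_of_lt hgt ⟨_, hpV, hps₀.trans hgt⟩,
      if_neg ((hps₀.trans hs₀n).trans_le hns).ne']
    rcases hns.eq_or_lt with rfl | hns
    · rw [if_pos rfl, lowerNeighbor_upperNeighbor hs₀ hp hn, max_eq_left hps₀.le]
      ring
    · have : upperNeighbor V s₀ ≤ lowerNeighbor V s :=
        (isGreatest_lowerNeighbor ⟨_, hnV, hns⟩).2 ⟨hnV, hns⟩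
      rw [if_neg hns.ne', max_eq_right (hs₀n.le.trans this)]
      ring

theorem sum_mul_neighborGap_insert (f : ℝ → ℝ) (hs₀ : s₀ ∉ V)
    (hp : ∃ t ∈ V, t < s₀) (hn : ∃ t ∈ V, s₀ < t) :
    ∑ s ∈ insert s₀ V, f s * neighborGap (insert s₀ V) s =
      ∑ s ∈ V, f s * neighborGap V s
        + (f s₀ * neighborGap V s₀
          - f (lowerNeighbor V s₀) * (upperNeighbor V s₀ - s₀)
          - f (upperNeighbor V s₀) * (s₀ - lowerNeighbor V s₀)) := by
  rw [sum_insert hs₀, neighborGap, lowerNeighbor_insert_of_le le_rfl,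
    upperNeighbor_insert_of_le le_rfl,
    sum_congr rfl fun s hs => by rw [neighborGap_insert hs hs₀ hp hn],
    neighborGap]
  simp only [mul_add, mul_ite, mul_zero, sum_add_distrib, sum_ite_eq',
    if_pos (isGreatest_lowerNeighbor hp).1.1, if_pos (isLeast_upperNeighbor hn).1.1]
  ring

end Trapezoid

section Tent

variable {a b : ℝ}

theorem tent_mul_sub_eq_of_affine {p s n : ℝ} (hp : b - a ≤ p) (hps : p ≤ s) (hsn : s ≤ n)
    (hn : n ≤ b + a) (hb : b ≤ p ∨ n ≤ b) :
    max (a - |s - b|) 0 * (n - p) =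
      max (a - |p - b|) 0 * (n - s) + max (a - |n - b|) 0 * (s - p) := by
  have htent : ∀ t, b - a ≤ t → t ≤ b + a → max (a - |t - b|) 0 = a - |t - b| := fun t h₁ h₂ =>
    max_eq_left (sub_nonneg.2 (abs_le.2 ⟨by linarith, by linarith⟩))
  rw [htent p hp (by linarith), htent s (by linarith) (by linarith), htent n (by linarith) hn]
  rcases hb with hb | hb
  · rw [abs_of_nonneg (by linarith : 0 ≤ s - b), abs_of_nonneg (by linarith : 0 ≤ p - b),
      abs_of_nonneg (by linarith : 0 ≤ n - b)]
    ring
  · rw [abs_of_nonpos (by linarith : s - b ≤ 0), abs_of_nonpos (by linarith : p - b ≤ 0),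
      abs_of_nonpos (by linarith : n - b ≤ 0)]
    ring

theorem sum_tent_mul_neighborGap_insert {V : Finset ℝ} {s₀ : ℝ}
    (hV : ∀ s ∈ V, s ∈ Set.Icc (b - a) (b + a)) (hl : b - a ∈ V) (hb : b ∈ V) (hr : b + a ∈ V)
    (hs₀ : s₀ ∈ Set.Icc (b - a) (b + a)) :
    ∑ s ∈ insert s₀ V, max (a - |s - b|) 0 * neighborGap (insert s₀ V) s =
      ∑ s ∈ V, max (a - |s - b|) 0 * neighborGap V s := by
  by_cases hs₀V : s₀ ∈ V
  · rw [insert_eq_of_mem hs₀V]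
  have hp : ∃ t ∈ V, t < s₀ := ⟨b - a, hl, hs₀.1.lt_of_ne fun h => hs₀V (h ▸ hl)⟩
  have hn : ∃ t ∈ V, s₀ < t := ⟨b + a, hr, hs₀.2.lt_of_ne fun h => hs₀V (h ▸ hr)⟩
  obtain ⟨⟨hpV, hps₀⟩, -⟩ := isGreatest_lowerNeighbor hp
  obtain ⟨⟨hnV, hs₀n⟩, -⟩ := isLeast_upperNeighbor hn
  -- the tent is affine between the neighbours of `s₀`, since its kink `b` lies in `V`
  have hkink : b ≤ lowerNeighbor V s₀ ∨ upperNeighbor V s₀ ≤ b := by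
    by_contra! h
    exact hs₀V (eq_of_mem_Ioo_neighbors hb h ▸ hb)
  rw [sum_mul_neighborGap_insert _ hs₀V hp hn, neighborGap,
    tent_mul_sub_eq_of_affine (hV _ hpV).1 hps₀.le hs₀n.le (hV _ hnV).2 hkink]
  ring

theorem sum_tent_mul_neighborGap_triple (ha : 0 < a) :
    ∑ s ∈ ({b - a, b, b + a} : Finset ℝ), max (a - |s - b|) 0 * neighborGap {b - a, b, b + a} s =
      2 * a ^ 2 := by
  have hlow : lowerNeighbor {b - a, b, b + a} b = b - a :=
    lowerNeighbor_eq ⟨⟨by simp, by linarith⟩, fun t ⟨ht, htb⟩ => by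
      simp only [mem_insert, mem_singleton] at ht
      rcases ht with rfl | rfl | rfl <;> linarith⟩
  have hup : upperNeighbor {b - a, b, b + a} b = b + a :=
    upperNeighbor_eq ⟨⟨by simp, by linarith⟩, fun t ⟨ht, hbt⟩ => by
      simp only [mem_insert, mem_singleton] at ht
      rcases ht with rfl | rfl | rfl <;> linarith⟩
  rw [sum_eq_single_of_mem b (by simp) fun t ht htb => ?_, neighborGap, hlow, hup, sub_self,
    abs_zero, sub_zero, max_eq_left ha.le]
  · ring
  · simp only [mem_insert, mem_singleton] at ht
    rcases ht with rfl | rfl | rfl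
    · simp [abs_of_pos ha]
    · exact absurd rfl htb
    · simp [abs_of_pos ha]

theorem sum_tent_mul_neighborGap (ha : 0 < a) {V : Finset ℝ}
    (hV : ∀ s ∈ V, s ∈ Set.Icc (b - a) (b + a)) (hl : b - a ∈ V) (hb : b ∈ V) (hr : b + a ∈ V) :
    ∑ s ∈ V, max (a - |s - b|) 0 * neighborGap V s = 2 * a ^ 2 := by
  set V₀ : Finset ℝ := {b - a, b, b + a}
  have hV₀ : ∀ s ∈ V₀, s ∈ Set.Icc (b - a) (b + a) := by
    simp only [V₀, mem_insert, mem_singleton]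
    rintro s (rfl | rfl | rfl) <;> constructor <;> linarith
  suffices ∀ W : Finset ℝ, (∀ s ∈ W, s ∈ Set.Icc (b - a) (b + a)) →
      ∑ s ∈ W ∪ V₀, max (a - |s - b|) 0 * neighborGap (W ∪ V₀) s = 2 * a ^ 2 by
    rw [← union_eq_left.2 (show V₀ ⊆ V by simp [V₀, insert_subset_iff, hl, hb, hr])]
    exact this V hV
  intro W hW
  induction W using Finset.induction_on with
  | empty => rw [empty_union]; exact sum_tent_mul_neighborGap_triple ha
  | insert s₀ W _ ih =>
    have hWV₀ : ∀ s ∈ W ∪ V₀, s ∈ Set.Icc (b - a) (b + a) := fun s hs =>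
      (mem_union.1 hs).elim (fun hs => hW s (mem_insert_of_mem hs)) (hV₀ s)
    rw [insert_union, sum_tent_mul_neighborGap_insert hWV₀ (by simp [V₀]) (by simp [V₀])
      (by simp [V₀]) (hW s₀ (mem_insert_self _ _))]
    exact ih fun s hs => hW s (mem_insert_of_mem hs)

end Tent

section Circle

variable {ℓ : ℝ}

theorem dist_coe_le_abs (w v : ℝ) : dist (w : AddCircle ℓ) (v : AddCircle ℓ) ≤ |w - v| := by
  rw [dist_eq_norm, ← AddCircle.coe_sub]
  exact QuotientAddGroup.norm_mk_le_norm

variable [hℓ : Fact (0 < ℓ)]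

theorem dist_coe_eq_abs {w v : ℝ} (h : |w - v| ≤ ℓ / 2) :
    dist (w : AddCircle ℓ) (v : AddCircle ℓ) = |w - v| := by
  rw [dist_eq_norm, ← AddCircle.coe_sub, AddCircle.norm_coe_eq_abs_iff ℓ hℓ.out.ne',
    abs_of_pos hℓ.out]
  exact h

theorem exists_coe_eq_and_dist_eq_abs (w : ℝ) (z : AddCircle ℓ) :
    ∃ v : ℝ, (v : AddCircle ℓ) = z ∧ dist (w : AddCircle ℓ) z = |w - v| := by
  obtain ⟨⟨v, hv₁, hv₂⟩, rfl⟩ := (AddCircle.equivIco ℓ (w - ℓ / 2)).symm.surjective z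
  refine ⟨v, rfl, dist_coe_eq_abs (abs_le.2 ⟨by linarith, by linarith⟩)⟩

theorem coe_ne_coe_of_lt_of_lt {s t : ℝ} (h : s < t) (h' : t < s + ℓ) :
    (s : AddCircle ℓ) ≠ t := by
  rw [ne_eq, AddCircle.coe_eq_coe_iff_of_mem_Ico ⟨le_rfl, by linarith [hℓ.out]⟩ ⟨h.le, h'⟩]
  exact h.ne

theorem le_dist_coe_of_mem_Icc {a x₀ u : ℝ} (hu : u ∈ Set.Icc (x₀ + a) (x₀ - a + ℓ)) :
    a ≤ dist (x₀ : AddCircle ℓ) u := by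
  obtain ⟨v, hv, hdist⟩ := exists_coe_eq_and_dist_eq_abs x₀ (u : AddCircle ℓ)
  rw [hdist]
  by_contra! h
  obtain ⟨h₁, h₂⟩ := abs_lt.1 h
  have hvu := (AddCircle.coe_eq_coe_iff_of_mem_Ioc (a := x₀ - a)
    ⟨by linarith, by linarith [hu.1, hu.2]⟩
    ⟨by linarith [abs_nonneg (x₀ - v), hu.1], hu.2⟩).1 hv
  linarith [hu.1]

theorem volume_coe_image_Ioo {L R : ℝ} (h : R ≤ L + ℓ) :
    volume (((↑) : ℝ → AddCircle ℓ) '' Set.Ioo L R) = ENNReal.ofReal (R - L) := by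
  rw [AddCircle.add_projection_respects_measure ℓ L
    (QuotientAddGroup.isOpenMap_coe _ isOpen_Ioo).measurableSet, ← Real.volume_Ioo]
  congr 1
  ext w
  constructor
  · rintro ⟨⟨s, hs, hsw⟩, hw⟩
    rwa [← (AddCircle.coe_eq_coe_iff_of_mem_Ioc ⟨hs.1, hs.2.le.trans h⟩ hw).1 hsw]
  · intro hw
    exact ⟨⟨w, hw, rfl⟩, hw.1, hw.2.le.trans h⟩

theorem voronoi_eq_image_Ioo {F : Finset (AddCircle ℓ)} {p u n : ℝ}
    (hp : (p : AddCircle ℓ) ∈ F) (hp' : (p : AddCircle ℓ) ≠ u)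
    (hn : (n : AddCircle ℓ) ∈ F) (hn' : (n : AddCircle ℓ) ≠ u) (hpu : p < u) (hun : u < n)
    (hgap : ∀ v ∈ Set.Ioo p n, (v : AddCircle ℓ) ∈ F → (v : AddCircle ℓ) = u) :
    voronoi ℓ F u = ((↑) : ℝ → AddCircle ℓ) '' Set.Ioo ((p + u) / 2) ((u + n) / 2) := by
  ext z
  constructor
  · intro hz
    obtain ⟨w, rfl, hw⟩ := exists_coe_eq_and_dist_eq_abs u z
    rw [dist_comm] at hw
    refine ⟨w, ⟨?_, ?_⟩, rfl⟩
    · by_contra! h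
      have hcloser : |w - p| ≤ |u - w| := sq_le_sq.1 (by nlinarith)
      exact (hz _ hp hp').not_ge (hw ▸ (dist_coe_le_abs w p).trans hcloser)
    · by_contra! h
      have hcloser : |w - n| ≤ |u - w| := sq_le_sq.1 (by nlinarith)
      exact (hz _ hn hn').not_ge (hw ▸ (dist_coe_le_abs w n).trans hcloser)
  · rintro ⟨w, ⟨hpw, hwn⟩, rfl⟩ y hy hyu
    obtain ⟨v, rfl, hv⟩ := exists_coe_eq_and_dist_eq_abs w y
    have hv' : v ≤ p ∨ n ≤ v := by
      by_contra! h
      exact hyu (hgap v h hy)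
    rw [hv]
    refine (dist_coe_le_abs w u).trans_lt (sq_lt_sq.1 ?_)
    rcases hv' with hv' | hv' <;> nlinarith

end Circle

section Window

variable {ℓ : ℝ} [Fact (0 < ℓ)] {F : Finset (AddCircle ℓ)} {c m t : ℝ}

/-- Cutting the circle open at the site `c`, each point lifts to `(c, c + ℓ]`; these are the lifts
that lie in `(c, m]`, together with `c` itself. -/
noncomputable def windowLifts (ℓ : ℝ) [Fact (0 < ℓ)] (F : Finset (AddCircle ℓ)) (c m : ℝ) :
    Finset ℝ :=
  insert c ((F.image fun y => (AddCircle.equivIoc ℓ c y : ℝ)).filter (· ≤ m))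

theorem mem_windowLifts (ht : (t : AddCircle ℓ) ∈ F) (hct : c < t) (htm : t ≤ m)
    (hm : m ≤ c + ℓ) : t ∈ windowLifts ℓ F c m :=
  mem_insert_of_mem <| mem_filter.2
    ⟨mem_image.2 ⟨_, ht, AddCircle.equivIoc_coe_of_mem ⟨hct, htm.trans hm⟩⟩, htm⟩

theorem coe_mem_of_mem_windowLifts (hc : (c : AddCircle ℓ) ∈ F)
    (ht : t ∈ windowLifts ℓ F c m) : (t : AddCircle ℓ) ∈ F := by
  rcases mem_insert.1 ht with rfl | ht
  · exact hc
  · obtain ⟨y, hy, rfl⟩ := mem_image.1 (mem_filter.1 ht).1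
    rwa [AddCircle.coe_equivIoc]

theorem mem_Icc_of_mem_windowLifts (hcm : c ≤ m) (ht : t ∈ windowLifts ℓ F c m) :
    t ∈ Set.Icc c m := by
  rcases mem_insert.1 ht with rfl | ht
  · exact ⟨le_rfl, hcm⟩
  · obtain ⟨ht, htm⟩ := mem_filter.1 ht
    obtain ⟨y, -, rfl⟩ := mem_image.1 ht
    exact ⟨(AddCircle.equivIoc ℓ c y).2.1.le, htm⟩

theorem sum_windowLifts (g : ℝ → ℝ) (hgc : g c = 0) (hgm : ∀ u, m < u → g u = 0) :
    ∑ u ∈ windowLifts ℓ F c m, g u =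
      ∑ u ∈ F.image fun y => (AddCircle.equivIoc ℓ c y : ℝ), g u := by
  rw [windowLifts, sum_insert_of_eq_zero_if_notMem fun _ => hgc]
  exact sum_filter_of_ne fun u _ hu => not_lt.1 fun hmu => hu (hgm u hmu)

theorem volume_voronoi_toReal (hc : (c : AddCircle ℓ) ∈ F) (hm : (m : AddCircle ℓ) ∈ F)
    (hmc : m ≤ c + ℓ) {u : ℝ} (hu : u ∈ Set.Ioo c m) :
    (volume (voronoi ℓ F u)).toReal = neighborGap (windowLifts ℓ F c m) u / 2 := by
  set V := windowLifts ℓ F c m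
  have hcm : c ≤ m := (hu.1.trans hu.2).le
  have hcV : c ∈ V := mem_insert_self _ _
  have hmV : m ∈ V := mem_windowLifts hm (hu.1.trans hu.2) le_rfl hmc
  obtain ⟨⟨hpV, hpu⟩, -⟩ := isGreatest_lowerNeighbor ⟨c, hcV, hu.1⟩
  obtain ⟨⟨hnV, hun⟩, -⟩ := isLeast_upperNeighbor ⟨m, hmV, hu.2⟩
  have hcp := (mem_Icc_of_mem_windowLifts (F := F) hcm hpV).1
  have hnm := (mem_Icc_of_mem_windowLifts (F := F) hcm hnV).2
  have hcell := voronoi_eq_image_Ioo (coe_mem_of_mem_windowLifts hc hpV)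
    (coe_ne_coe_of_lt_of_lt hpu (by linarith [hu.2])) (coe_mem_of_mem_windowLifts hc hnV)
    (coe_ne_coe_of_lt_of_lt hun (by linarith [hu.1])).symm hpu hun fun v hv hvF => by
      rw [eq_of_mem_Ioo_neighbors
        (mem_windowLifts hvF (hcp.trans_lt hv.1) (hv.2.le.trans hnm) hmc) hv]
  rw [hcell, volume_coe_image_Ioo (by linarith), ENNReal.toReal_ofReal (by linarith), neighborGap]
  ring

theorem tent_mul_volume_voronoi_eq {a x₀ : ℝ} (haℓ : a ≤ ℓ / 2)
    (hl : ((x₀ - a : ℝ) : AddCircle ℓ) ∈ F) (hr : ((x₀ + a : ℝ) : AddCircle ℓ) ∈ F) {u : ℝ}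
    (hu : u ∈ Set.Ioc (x₀ - a) (x₀ - a + ℓ)) :
    max (a - dist (x₀ : AddCircle ℓ) u) 0 * (volume (voronoi ℓ F u)).toReal =
      max (a - |u - x₀|) 0 * (neighborGap (windowLifts ℓ F (x₀ - a) (x₀ + a)) u / 2) := by
  rcases lt_or_ge u (x₀ + a) with hlt | hge
  · rw [dist_coe_eq_abs (abs_le.2 ⟨by linarith, by linarith [hu.1]⟩), abs_sub_comm,
      volume_voronoi_toReal hl hr (by linarith) ⟨hu.1, hlt⟩]
  · rw [max_eq_right (sub_nonpos.2 (le_dist_coe_of_mem_Icc ⟨hge, hu.2⟩)),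
      max_eq_right (sub_nonpos.2 (le_abs.2 (Or.inl (by linarith)))), zero_mul, zero_mul]

end Window

/-- Exact interpolation identity: if the configuration `ζ` has atoms at `x-a`, `x`, `x+a`,
then `∑_y (a - d(x,y))₊ · length(Γ_ζ(y)) = a²` (length = arc length = `ℓ · m`). -/
theorem voronoi_tent_identity (ℓ : ℝ) [Fact (0 < ℓ)] (a : ℝ) (ha : 0 < a) (haℓ : a ≤ ℓ / 2)
    (x : AddCircle ℓ) (ζ : AddCircle ℓ →₀ ℕ)
    (hx : x ∈ ζ.support) (hxl : x - (a : ℝ) ∈ ζ.support) (hxr : x + (a : ℝ) ∈ ζ.support) :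
    ∑ y ∈ ζ.support, max (a - dist x y) 0 * (volume (voronoi ℓ ζ.support y)).toReal
      = a ^ 2 := by
  obtain ⟨x₀, rfl⟩ := QuotientAddGroup.mk_surjective x
  rw [← AddCircle.coe_sub] at hxl
  rw [← AddCircle.coe_add] at hxr
  set lift : AddCircle ℓ → ℝ := fun y => AddCircle.equivIoc ℓ (x₀ - a) y
  set V := windowLifts ℓ ζ.support (x₀ - a) (x₀ + a)
  set g : ℝ → ℝ := fun u => max (a - |u - x₀|) 0 * neighborGap V u
  calc ∑ y ∈ ζ.support, max (a - dist (x₀ : AddCircle ℓ) y) 0 *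
        (volume (voronoi ℓ ζ.support y)).toReal
      = ∑ y ∈ ζ.support, g (lift y) / 2 := sum_congr rfl fun y _ => by
        conv_lhs => rw [← AddCircle.coe_equivIoc (a := x₀ - a) (y := y)]
        rw [tent_mul_volume_voronoi_eq haℓ hxl hxr (AddCircle.equivIoc ℓ (x₀ - a) y).2]
        ring
    _ = (∑ u ∈ ζ.support.image lift, g u) / 2 := by
      rw [sum_image fun y _ y' _ h => (AddCircle.equivIoc ℓ (x₀ - a)).injective (Subtype.ext h),
        sum_div]
    _ = (∑ u ∈ V, g u) / 2 := by
      rw [sum_windowLifts g (by simp [g, abs_of_pos ha]) fun u hu => mul_eq_zero_of_left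
        (max_eq_right (sub_nonpos.2 (le_abs.2 (Or.inl (by linarith))))) _]
    _ = a ^ 2 := by
      rw [sum_tent_mul_neighborGap ha (fun s hs => mem_Icc_of_mem_windowLifts (by linarith) hs)
        (mem_insert_self _ _) (mem_windowLifts hx (by linarith) (by linarith) (by linarith))
        (mem_windowLifts hxr (by linarith) le_rfl (by linarith))]
      ring
end

section
/- Adding a point preserves the interpolation identity: let 0 < a ≤ ℓ/2, let x ∈ S, and let ζ be a configuration with atoms at x-a, x, x+a such that g(x,ζ) := ∑_{y ∈ ζ} (a - d(x,y))₊ · length(Γ_ζ(y)) = a². Then for any point z ∈ S, the configuration ζ' = ζ + δ_z also satisfies g(x,ζ') = a². -/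
/-!
Adding a site `z ∉ ζ` only hands parts of old cells over to the new cell `Γ'(z)` (equidistant
sets are null), so with `w y = (a - d(x,y))₊` the functional changes by
`w z · |Γ'(z)| - ∑_y w y · |Γ(y) ∩ Γ'(z)|`. The geometric input is that a shortest arc from a
point inside an arc `I` to a point outside passes through an endpoint of `I`.

If `d(x,z) ≥ a`, take `I = (x-a, x+a)`: its endpoints are sites, so every cell lies on one side
of them; `Γ'(z)` is outside, the cells of the sites with `w y > 0` inside, and all terms vanish.

If `d(x,z) < a`, measure arcs from `z` and let the neighbours of `z` sit at `u < 0 < v`. Then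
`Γ'(z) = (u/2, v/2)`, of which the left neighbour loses `(u/2, (u+v)/2)` and the right one
`((u+v)/2, v/2)`. As `x` is a site and one of `x ∓ a` lies beyond `z`, the weight is the affine
function `r ↦ a - |c - r|` on `[u, v]` (`c` the coordinate of `x`), and for affine `w`
`w(0) (v-u)/2 = w(u) v/2 + w(v) (-u)/2`.
-/

open Finset MeasureTheory

/-- The interpolation functional `g(x,ζ) = ∑_y (a - d(x,y))₊ · length(Γ_ζ(y))`. -/
noncomputable def g (ℓ : ℝ) [Fact (0 < ℓ)] (a : ℝ) (x : AddCircle ℓ)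
    (ζ : AddCircle ℓ →₀ ℕ) : ℝ :=
  ∑ y ∈ ζ.support, max (a - dist x y) 0 * (volume (voronoi ℓ ζ.support y)).toReal

namespace AddCircle

variable {ℓ : ℝ}

lemma dist_add_coe_add_coe (o : AddCircle ℓ) (s s' : ℝ) :
    dist (o + s) (o + s') = ‖((s - s' : ℝ) : AddCircle ℓ)‖ := by
  rw [dist_eq_norm, add_sub_add_left_eq_sub, coe_sub]

variable [hℓ : Fact (0 < ℓ)]

lemma norm_coe_eq_abs_of_abs_le {w : ℝ} (hw : |w| ≤ ℓ / 2) : ‖(w : AddCircle ℓ)‖ = |w| :=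
  (norm_coe_eq_abs_iff ℓ hℓ.out.ne').2 (by rwa [abs_of_pos hℓ.out])

lemma norm_coe_le_abs (w : ℝ) : ‖(w : AddCircle ℓ)‖ ≤ |w| := by
  rcases le_or_gt |w| (ℓ / 2) with h | h
  · rw [norm_coe_eq_abs_of_abs_le h]
  · exact (norm_le_half_period ℓ hℓ.out.ne').trans (by rw [abs_of_pos hℓ.out]; exact h.le)

lemma norm_coe_le {w c : ℝ} (h₁ : -c ≤ w) (h₂ : w ≤ c) : ‖(w : AddCircle ℓ)‖ ≤ c :=
  (norm_coe_le_abs w).trans (abs_le.2 ⟨h₁, h₂⟩)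

lemma norm_coe_eq_min_abs {w : ℝ} (hw : |w| ≤ ℓ) :
    ‖(w : AddCircle ℓ)‖ = min |w| (ℓ - |w|) := by
  rcases le_or_gt |w| (ℓ / 2) with h | h
  · rw [norm_coe_eq_abs_of_abs_le h, min_eq_left (by linarith)]
  rw [min_eq_right (by linarith)]
  rcases abs_cases w with ⟨hw', -⟩ | ⟨hw', -⟩ <;> rw [hw'] at hw h ⊢
  · rw [show (w : AddCircle ℓ) = ((w - ℓ : ℝ) : AddCircle ℓ) by simp [coe_period],
      norm_coe_eq_abs_of_abs_le] <;> rw [abs_of_nonpos] <;> linarith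
  · rw [show (w : AddCircle ℓ) = ((w + ℓ : ℝ) : AddCircle ℓ) by simp,
      norm_coe_eq_abs_of_abs_le] <;> rw [abs_of_nonneg] <;> linarith

lemma norm_coe_lt_norm_coe_iff {A B : ℝ} (h : |A| + |B| < ℓ) :
    ‖(A : AddCircle ℓ)‖ < ‖(B : AddCircle ℓ)‖ ↔ |A| < |B| := by
  rw [norm_coe_eq_min_abs (by linarith [abs_nonneg B]),
    norm_coe_eq_min_abs (by linarith [abs_nonneg A])]
  simp only [lt_min_iff, min_lt_iff]
  constructor
  · rintro ⟨h₁ | h₁, -⟩ <;> linarith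
  · intro h'
    exact ⟨Or.inl h', Or.inl (by linarith)⟩

/-- An endpoint of the arc `(α, β)` lies on a shortest arc from a point inside it to one outside. -/
lemma exists_norm_coe_add_norm_coe_le {α β π κ : ℝ} (hα : -(ℓ / 2) ≤ α) (hβ : β ≤ ℓ / 2)
    (hπ : π ∈ Set.Ioo α β) (hκ : κ ∈ Set.Icc (-(ℓ / 2)) (ℓ / 2)) (hκ' : κ ∉ Set.Ioo α β) :
    ∃ e ∈ ({α, β} : Set ℝ), ‖((π - e : ℝ) : AddCircle ℓ)‖ + ‖((e - κ : ℝ) : AddCircle ℓ)‖ ≤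
      ‖((π - κ : ℝ) : AddCircle ℓ)‖ := by
  obtain ⟨hπα, hπβ⟩ := hπ
  obtain ⟨hκ₁, hκ₂⟩ := hκ
  rw [norm_coe_eq_min_abs (abs_le.2 ⟨by linarith, by linarith⟩)]
  rcases le_or_gt β κ with hβκ | hκβ
  · rw [abs_of_neg (by linarith)]
    rcases le_total (κ - π) (ℓ - (κ - π)) with h | h
    · refine ⟨β, by simp, le_min ?_ ?_⟩ <;>
        linarith [norm_coe_le (ℓ := ℓ) (w := π - β) (c := β - π) (by linarith) (by linarith),
          norm_coe_le (ℓ := ℓ) (w := β - κ) (c := κ - β) (by linarith) (by linarith)]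
    · have h₁ := norm_coe_le (ℓ := ℓ) (w := α - κ + ℓ) (c := α - κ + ℓ) (by linarith) le_rfl
      rw [coe_add_period] at h₁
      refine ⟨α, by simp, le_min ?_ ?_⟩ <;>
        linarith [norm_coe_le (ℓ := ℓ) (w := π - α) (c := π - α) (by linarith) (by linarith)]
  · have hκα : κ ≤ α := not_lt.1 fun h => hκ' ⟨h, hκβ⟩
    rw [abs_of_pos (by linarith)]
    rcases le_total (π - κ) (ℓ - (π - κ)) with h | h
    · refine ⟨α, by simp, le_min ?_ ?_⟩ <;>
        linarith [norm_coe_le (ℓ := ℓ) (w := π - α) (c := π - α) (by linarith) (by linarith),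
          norm_coe_le (ℓ := ℓ) (w := α - κ) (c := α - κ) (by linarith) (by linarith)]
    · have h₁ := norm_coe_le (ℓ := ℓ) (w := β - κ - ℓ) (c := ℓ - β + κ) (by linarith) (by linarith)
      rw [show ((β - κ - ℓ : ℝ) : AddCircle ℓ) = ((β - κ : ℝ) : AddCircle ℓ) by
        simp [coe_period]] at h₁
      refine ⟨β, by simp, le_min ?_ ?_⟩ <;>
        linarith [norm_coe_le (ℓ := ℓ) (w := π - β) (c := β - π) (by linarith) (by linarith)]

variable (ℓ) in
noncomputable def arcCoord (o t : AddCircle ℓ) : ℝ := equivIoc ℓ (-(ℓ / 2)) (t - o)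

lemma arcCoord_mem_Ioc (o t : AddCircle ℓ) : arcCoord ℓ o t ∈ Set.Ioc (-(ℓ / 2)) (ℓ / 2) := by
  have h := (equivIoc ℓ (-(ℓ / 2)) (t - o)).2
  exact ⟨h.1, h.2.trans_eq (by ring)⟩

lemma add_arcCoord (o t : AddCircle ℓ) : o + (arcCoord ℓ o t : AddCircle ℓ) = t := by
  rw [arcCoord, coe_equivIoc, add_sub_cancel]

lemma arcCoord_add_coe (o : AddCircle ℓ) {s : ℝ} (hs : s ∈ Set.Ioc (-(ℓ / 2)) (ℓ / 2)) :
    arcCoord ℓ o (o + s) = s := by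
  rw [arcCoord, add_sub_cancel_left, equivIoc_coe_eq ⟨hs.1, hs.2.trans_eq (by ring)⟩]

lemma arcCoord_injective (o : AddCircle ℓ) : Function.Injective (arcCoord ℓ o) := fun t t' h => by
  rw [← add_arcCoord o t, h, add_arcCoord]

@[simp] lemma arcCoord_self (o : AddCircle ℓ) : arcCoord ℓ o o = 0 := by
  simpa using arcCoord_add_coe o (s := 0) ⟨by linarith [hℓ.out], by linarith [hℓ.out]⟩

lemma dist_eq_norm_arcCoord_sub (o p q : AddCircle ℓ) :
    dist p q = ‖((arcCoord ℓ o p - arcCoord ℓ o q : ℝ) : AddCircle ℓ)‖ := by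
  rw [← dist_add_coe_add_coe o, add_arcCoord, add_arcCoord]

lemma dist_eq_abs_arcCoord (o t : AddCircle ℓ) : dist t o = |arcCoord ℓ o t| := by
  have h := arcCoord_mem_Ioc o t
  rw [dist_eq_norm_arcCoord_sub o, arcCoord_self, sub_zero,
    norm_coe_eq_abs_of_abs_le (abs_le.2 ⟨h.1.le, h.2⟩)]

lemma eq_or_eq_neg_of_norm_eq {p q : AddCircle ℓ} (h : ‖p‖ = ‖q‖) : p = q ∨ p = -q := by
  rw [← dist_zero_right, ← dist_zero_right, dist_eq_abs_arcCoord, dist_eq_abs_arcCoord] at h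
  rcases abs_eq_abs.1 h with h | h
  · exact Or.inl (arcCoord_injective 0 h)
  · right
    rw [← add_arcCoord 0 p, ← add_arcCoord 0 q, h, zero_add, zero_add, coe_neg]

lemma volume_setOf_dist_eq_dist {y y' : AddCircle ℓ} (h : y ≠ y') :
    volume {t | dist t y = dist t y'} = 0 := by
  have hsub : {t | dist t y = dist t y'} ⊆ (fun t => 2 • t) ⁻¹' {y + y'} := by
    intro t ht
    rcases eq_or_eq_neg_of_norm_eq (p := t - y) (q := t - y')
      (by rwa [← dist_eq_norm, ← dist_eq_norm]) with h' | h'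
    · exact absurd (sub_right_injective h') h
    · simp only [Set.mem_preimage, Set.mem_singleton_iff, two_nsmul]
      rw [neg_sub, sub_eq_sub_iff_add_eq_add] at h'
      rw [h', add_comm]
  refine measure_mono_null hsub ?_
  rw [(ergodic_nsmul (T := ℓ) one_lt_two).measure_preimage
    (measurableSet_singleton _).nullMeasurableSet, ← Metric.closedBall_zero, volume_closedBall]
  simp

lemma volume_preimage_arcCoord_Ioo (o : AddCircle ℓ) {α β : ℝ} (hα : -(ℓ / 2) ≤ α)
    (hβ : β ≤ ℓ / 2) : volume (arcCoord ℓ o ⁻¹' Set.Ioo α β) = ENNReal.ofReal (β - α) := by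
  have : arcCoord ℓ o ⁻¹' Set.Ioo α β
      = (fun t => -o + t) ⁻¹' (equivIoc ℓ (-(ℓ / 2)) ⁻¹' (Subtype.val ⁻¹' Set.Ioo α β)) := by
    ext t; simp [arcCoord, sub_eq_neg_add]
  rw [this, measure_preimage_add, (measurePreserving_equivIoc ℓ).measure_preimage
    (measurableSet_Ioo.preimage measurable_subtype_coe).nullMeasurableSet,
    comap_subtype_coe_apply measurableSet_Ioc, Subtype.image_preimage_coe,
    Set.inter_eq_right.2 (Set.Ioo_subset_Ioc_self.trans (Set.Ioc_subset_Ioc hα (by linarith))),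
    Real.volume_Ioo]

lemma exists_dist_add_dist_le (o : AddCircle ℓ) {p q : AddCircle ℓ} {α β : ℝ}
    (hα : -(ℓ / 2) ≤ α) (hβ : β ≤ ℓ / 2)
    (hp : arcCoord ℓ o p ∈ Set.Ioo α β) (hq : arcCoord ℓ o q ∉ Set.Ioo α β) :
    ∃ e ∈ ({α, β} : Set ℝ), dist p (o + e) + dist (o + e) q ≤ dist p q := by
  obtain ⟨e, he, h⟩ := exists_norm_coe_add_norm_coe_le hα hβ hp
    (Set.Ioc_subset_Icc_self (arcCoord_mem_Ioc o q)) hq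
  refine ⟨e, he, ?_⟩
  rwa [← add_arcCoord o p, ← add_arcCoord o q, dist_add_coe_add_coe, dist_add_coe_add_coe,
    dist_add_coe_add_coe]

end AddCircle

lemma sub_abs_mul_eq_of_notMem_Ioo {a c u v : ℝ} (hu : u < 0) (hv : 0 < v)
    (hc : c ∉ Set.Ioo u v) :
    (a - |c|) * ((v - u) / 2) = (a - |c - u|) * (v / 2) + (a - |c - v|) * (-u / 2) := by
  rcases le_or_gt c u with hcu | hcu
  · rw [abs_of_neg (by linarith), abs_of_nonpos (by linarith), abs_of_neg (by linarith)]
    ring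
  · have hvc : v ≤ c := not_lt.1 fun h => hc ⟨hcu, h⟩
    rw [abs_of_pos (by linarith), abs_of_pos (by linarith), abs_of_nonneg (by linarith)]
    ring

open AddCircle

section Voronoi

variable {ℓ : ℝ} {F : Finset (AddCircle ℓ)} {y z : AddCircle ℓ}

lemma voronoi_insert_of_ne (hyz : y ≠ z) :
    voronoi ℓ (insert z F) y = voronoi ℓ F y ∩ {t | dist t y < dist t z} := by
  ext t
  simp only [voronoi, Set.mem_ofPred_eq, Set.mem_inter_iff, Finset.forall_mem_insert]
  exact ⟨fun h => ⟨h.2, h.1 hyz.symm⟩, fun h => ⟨fun _ => h.2, h.1⟩⟩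

lemma voronoi_inter_voronoi_insert_self (hy : y ∈ F) (hz : z ∉ F) :
    voronoi ℓ F y ∩ voronoi ℓ (insert z F) z = voronoi ℓ F y ∩ {t | dist t z < dist t y} := by
  ext t
  refine and_congr_right fun ht => ⟨fun h => h y (Finset.mem_insert_of_mem hy) ?_, fun h => ?_⟩
  · rintro rfl; exact hz hy
  simp only [voronoi, Set.mem_ofPred_eq, Finset.forall_mem_insert, ne_eq, not_true_eq_false,
    IsEmpty.forall_iff, true_and]
  intro y' hy' hne
  rcases eq_or_ne y' y with rfl | hy'y
  · exact h
  · exact h.trans (ht y' hy' hy'y)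

lemma mem_voronoi_iff_of_dist_lt_or_dist_lt {t y' : AddCircle ℓ} (hy' : y' ∈ F) (hne : y' ≠ y)
    (hF : ∀ s ∈ F, s ≠ y → s ≠ y' → dist t y < dist t s ∨ dist t y' < dist t s) :
    t ∈ voronoi ℓ F y ↔ dist t y < dist t y' := by
  refine ⟨fun ht => ht y' hy' hne, fun h s hs hsy => ?_⟩
  rcases eq_or_ne s y' with rfl | hsy'
  · exact h
  · exact (hF s hs hsy hsy').elim id h.trans

variable [Fact (0 < ℓ)]

lemma volume_voronoi_eq_add (hy : y ∈ F) (hz : z ∉ F) :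
    volume (voronoi ℓ F y) =
      volume (voronoi ℓ (insert z F) y) + volume (voronoi ℓ F y ∩ voronoi ℓ (insert z F) z) := by
  have hyz : y ≠ z := by rintro rfl; exact hz hy
  rw [voronoi_insert_of_ne hyz, voronoi_inter_voronoi_insert_self hy hz,
    ← measure_inter_add_sdiff (voronoi ℓ F y)
      (isOpen_lt (continuous_id.dist continuous_const)
        (continuous_id.dist continuous_const)).measurableSet]
  congr 1
  refine measure_congr (Filter.eventuallyEq_set.2 ?_)
  filter_upwards [measure_eq_zero_iff_ae_notMem.1 (volume_setOf_dist_eq_dist hyz)]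
    with t (ht : dist t y ≠ dist t z)
  simp only [Set.mem_sdiff, Set.mem_inter_iff, Set.mem_ofPred_eq, not_lt]
  exact and_congr_right fun _ => (Ne.le_iff_lt (Ne.symm ht))

lemma sum_mul_volume_voronoi_insert (w : AddCircle ℓ → ℝ) (hz : z ∉ F) :
    ∑ y ∈ insert z F, w y * (volume (voronoi ℓ (insert z F) y)).toReal =
      ∑ y ∈ F, w y * (volume (voronoi ℓ F y)).toReal +
        (w z * (volume (voronoi ℓ (insert z F) z)).toReal -
          ∑ y ∈ F, w y * (volume (voronoi ℓ F y ∩ voronoi ℓ (insert z F) z)).toReal) := by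
  have hsplit (y) (hy : y ∈ F) : (volume (voronoi ℓ F y)).toReal =
      (volume (voronoi ℓ (insert z F) y)).toReal +
        (volume (voronoi ℓ F y ∩ voronoi ℓ (insert z F) z)).toReal := by
    rw [volume_voronoi_eq_add hy hz, ENNReal.toReal_add (measure_ne_top _ _) (measure_ne_top _ _)]
  have hsum : ∑ y ∈ F, w y * (volume (voronoi ℓ F y)).toReal =
      ∑ y ∈ F, w y * (volume (voronoi ℓ (insert z F) y)).toReal +
        ∑ y ∈ F, w y * (volume (voronoi ℓ F y ∩ voronoi ℓ (insert z F) z)).toReal := by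
    rw [← Finset.sum_add_distrib]
    exact Finset.sum_congr rfl fun y hy => by rw [hsplit y hy, mul_add]
  rw [Finset.sum_insert hz, hsum]
  ring

lemma dist_lt_iff_of_mem_voronoi {c t : AddCircle ℓ} {b : ℝ} (hb : b ≤ ℓ / 2)
    (hl : c - (b : AddCircle ℓ) ∈ F) (hr : c + (b : AddCircle ℓ) ∈ F)
    (hyl : y ≠ c - (b : AddCircle ℓ)) (hyr : y ≠ c + (b : AddCircle ℓ))
    (ht : t ∈ voronoi ℓ F y) : dist t c < b ↔ dist y c < b := by
  have hF : ∀ e ∈ ({-b, b} : Set ℝ), c + (e : AddCircle ℓ) ∈ F ∧ c + (e : AddCircle ℓ) ≠ y := by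
    rintro e (rfl | rfl)
    · rw [AddCircle.coe_neg, ← sub_eq_add_neg]; exact ⟨hl, hyl.symm⟩
    · exact ⟨hr, hyr.symm⟩
  rw [dist_eq_abs_arcCoord c, dist_eq_abs_arcCoord c, abs_lt, abs_lt]
  constructor
  · intro htc
    by_contra hyc
    obtain ⟨e, he, h⟩ := exists_dist_add_dist_le c (by linarith) hb htc hyc
    exact (ht _ (hF e he).1 (hF e he).2).not_ge (by linarith [dist_nonneg (x := c + e) (y := y)])
  · intro hyc
    by_contra htc
    obtain ⟨e, he, h⟩ := exists_dist_add_dist_le c (by linarith) hb hyc htc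
    exact (ht _ (hF e he).1 (hF e he).2).not_ge
      (by rw [dist_comm t, dist_comm t]; linarith [dist_nonneg (x := y) (y := c + e)])

lemma sum_mul_volume_voronoi_inter_of_le_dist {a : ℝ} {x : AddCircle ℓ} (haℓ : a ≤ ℓ / 2)
    (hxl : x - (a : AddCircle ℓ) ∈ F) (hxr : x + (a : AddCircle ℓ) ∈ F) (hz : z ∉ F)
    (hzx : a ≤ dist z x) :
    max (a - dist x z) 0 * (volume (voronoi ℓ (insert z F) z)).toReal =
      ∑ y ∈ F, max (a - dist x y) 0 *
        (volume (voronoi ℓ F y ∩ voronoi ℓ (insert z F) z)).toReal := by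
  rw [max_eq_right (by rw [dist_comm]; linarith), zero_mul, eq_comm]
  refine Finset.sum_eq_zero fun y _ => ?_
  rcases lt_or_ge (dist y x) a with hyx | hyx
  · have ha : 0 < a := dist_nonneg.trans_lt hyx
    have hxa : ‖(a : AddCircle ℓ)‖ = a := by
      rw [norm_coe_eq_abs_of_abs_le (by rwa [abs_of_pos ha]), abs_of_pos ha]
    have hdisj : voronoi ℓ F y ∩ voronoi ℓ (insert z F) z = ∅ := by
      refine Set.eq_empty_of_forall_notMem fun t ⟨ht, ht'⟩ => ?_
      have h₁ := dist_lt_iff_of_mem_voronoi haℓ hxl hxr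
        (by rintro rfl; simp [hxa] at hyx) (by rintro rfl; simp [hxa] at hyx) ht
      have h₂ := dist_lt_iff_of_mem_voronoi haℓ (Finset.mem_insert_of_mem hxl)
        (Finset.mem_insert_of_mem hxr) (by rintro rfl; exact hz hxl)
        (by rintro rfl; exact hz hxr) ht'
      exact hzx.not_gt (h₂.1 (h₁.2 hyx))
    rw [hdisj, measure_empty, ENNReal.toReal_zero, mul_zero]
  · rw [max_eq_right (by rw [dist_comm]; linarith), zero_mul]

structure IsNeighborPair (F : Finset (AddCircle ℓ)) (z y₁ y₂ : AddCircle ℓ) : Prop where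
  left_mem : y₁ ∈ F
  right_mem : y₂ ∈ F
  arcCoord_left_neg : arcCoord ℓ z y₁ < 0
  arcCoord_right_pos : 0 < arcCoord ℓ z y₂
  arcCoord_notMem : ∀ y ∈ F, arcCoord ℓ z y ∉ Set.Ioo (arcCoord ℓ z y₁) (arcCoord ℓ z y₂)

namespace IsNeighborPair

variable {y₁ y₂ : AddCircle ℓ}

lemma notMem (h : IsNeighborPair F z y₁ y₂) : z ∉ F := fun hz =>
  h.arcCoord_notMem z hz (by simpa using ⟨h.arcCoord_left_neg, h.arcCoord_right_pos⟩)

lemma left_ne_right (h : IsNeighborPair F z y₁ y₂) : y₁ ≠ y₂ := fun he => by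
  have := h.arcCoord_left_neg.trans h.arcCoord_right_pos
  rw [he] at this
  exact lt_irrefl _ this

lemma dist_lt_or_dist_lt (h : IsNeighborPair F z y₁ y₂) {t : AddCircle ℓ}
    (ht : arcCoord ℓ z t ∈ Set.Ioo (arcCoord ℓ z y₁) (arcCoord ℓ z y₂)) (hy : y ∈ F)
    (hy₁ : y ≠ y₁) (hy₂ : y ≠ y₂) : dist t y₁ < dist t y ∨ dist t y₂ < dist t y := by
  obtain ⟨e, he, hle⟩ := exists_dist_add_dist_le z (arcCoord_mem_Ioc z y₁).1.le
    (arcCoord_mem_Ioc z y₂).2 ht (h.arcCoord_notMem y hy)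
  rcases he with rfl | rfl
  · rw [add_arcCoord] at hle
    exact Or.inl (by linarith [dist_pos.2 hy₁.symm])
  · rw [add_arcCoord] at hle
    exact Or.inr (by linarith [dist_pos.2 hy₂.symm])

lemma voronoi_insert_self (h : IsNeighborPair F z y₁ y₂) :
    voronoi ℓ (insert z F) z =
      arcCoord ℓ z ⁻¹' Set.Ioo (arcCoord ℓ z y₁ / 2) (arcCoord ℓ z y₂ / 2) := by
  have hu := h.arcCoord_left_neg
  have hv := h.arcCoord_right_pos
  obtain ⟨hu₁, -⟩ := arcCoord_mem_Ioc z y₁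
  obtain ⟨-, hv₂⟩ := arcCoord_mem_Ioc z y₂
  set u := arcCoord ℓ z y₁
  set v := arcCoord ℓ z y₂
  ext t
  obtain ⟨hτ₁, hτ₂⟩ := arcCoord_mem_Ioc z t
  set τ := arcCoord ℓ z t
  have hdist (y : AddCircle ℓ) : dist t y = ‖((τ - arcCoord ℓ z y : ℝ) : AddCircle ℓ)‖ :=
    dist_eq_norm_arcCoord_sub z t y
  have hne (y : AddCircle ℓ) (hy : y ∈ F) : y ≠ z := by rintro rfl; exact h.notMem hy
  constructor
  · intro ht
    have h₁ := (ht y₁ (Finset.mem_insert_of_mem h.left_mem) (hne _ h.left_mem)).trans_le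
      ((hdist y₁).trans_le (norm_coe_le_abs _))
    have h₂ := (ht y₂ (Finset.mem_insert_of_mem h.right_mem) (hne _ h.right_mem)).trans_le
      ((hdist y₂).trans_le (norm_coe_le_abs _))
    rw [dist_eq_abs_arcCoord] at h₁ h₂
    constructor <;>
    rcases abs_cases τ with ⟨e, _⟩ | ⟨e, _⟩ <;> rw [e] at h₁ h₂ <;>
    rcases abs_cases (τ - u) with ⟨e₁, _⟩ | ⟨e₁, _⟩ <;> rw [e₁] at h₁ <;>
    rcases abs_cases (τ - v) with ⟨e₂, _⟩ | ⟨e₂, _⟩ <;> rw [e₂] at h₂ <;> linarith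
  · intro hτ y hy hyz
    obtain ⟨h₁, h₂⟩ : u / 2 < τ ∧ τ < v / 2 := hτ
    have hyF : y ∈ F := (Finset.mem_insert.1 hy).resolve_left hyz
    have hz₁ : dist t z < dist t y₁ := by
      rw [dist_eq_norm_arcCoord_sub z t z, arcCoord_self, hdist, norm_coe_lt_norm_coe_iff] <;>
      rcases abs_cases τ with ⟨e, _⟩ | ⟨e, _⟩ <;> rw [sub_zero, e] <;>
      rcases abs_cases (τ - u) with ⟨e₁, _⟩ | ⟨e₁, _⟩ <;> rw [e₁] <;> linarith
    have hz₂ : dist t z < dist t y₂ := by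
      rw [dist_eq_norm_arcCoord_sub z t z, arcCoord_self, hdist, norm_coe_lt_norm_coe_iff] <;>
      rcases abs_cases τ with ⟨e, _⟩ | ⟨e, _⟩ <;> rw [sub_zero, e] <;>
      rcases abs_cases (τ - v) with ⟨e₁, _⟩ | ⟨e₁, _⟩ <;> rw [e₁] <;> linarith
    rcases eq_or_ne y y₁ with rfl | hy₁
    · exact hz₁
    rcases eq_or_ne y y₂ with rfl | hy₂
    · exact hz₂
    rcases h.dist_lt_or_dist_lt ⟨by linarith, by linarith⟩ hyF hy₁ hy₂ with h' | h'
    · exact hz₁.trans h'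
    · exact hz₂.trans h'

lemma mem_voronoi_iff (h : IsNeighborPair F z y₁ y₂) {t : AddCircle ℓ}
    (ht : arcCoord ℓ z t ∈ Set.Ioo (arcCoord ℓ z y₁) (arcCoord ℓ z y₂)) :
    (t ∈ voronoi ℓ F y₁ ↔ arcCoord ℓ z t < (arcCoord ℓ z y₁ + arcCoord ℓ z y₂) / 2) ∧
      (t ∈ voronoi ℓ F y₂ ↔ (arcCoord ℓ z y₁ + arcCoord ℓ z y₂) / 2 < arcCoord ℓ z t) := by
  obtain ⟨hτ₁, hτ₂⟩ := ht
  obtain ⟨hu₁, -⟩ := arcCoord_mem_Ioc z y₁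
  obtain ⟨-, hv₂⟩ := arcCoord_mem_Ioc z y₂
  have hsum : |arcCoord ℓ z t - arcCoord ℓ z y₁| + |arcCoord ℓ z t - arcCoord ℓ z y₂| < ℓ := by
    rw [abs_of_pos (by linarith), abs_of_neg (by linarith)]
    linarith
  rw [mem_voronoi_iff_of_dist_lt_or_dist_lt h.right_mem h.left_ne_right.symm
      fun s hs hs₁ hs₂ => h.dist_lt_or_dist_lt ⟨hτ₁, hτ₂⟩ hs hs₁ hs₂,
    mem_voronoi_iff_of_dist_lt_or_dist_lt h.left_mem h.left_ne_right
      fun s hs hs₂ hs₁ => (h.dist_lt_or_dist_lt ⟨hτ₁, hτ₂⟩ hs hs₁ hs₂).symm,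
    dist_eq_norm_arcCoord_sub z t y₁, dist_eq_norm_arcCoord_sub z t y₂,
    norm_coe_lt_norm_coe_iff hsum, norm_coe_lt_norm_coe_iff (by linarith),
    abs_of_pos (by linarith), abs_of_neg (by linarith)]
  constructor <;> constructor <;> intro <;> linarith

lemma voronoi_left_inter_voronoi_insert_self (h : IsNeighborPair F z y₁ y₂) :
    voronoi ℓ F y₁ ∩ voronoi ℓ (insert z F) z = arcCoord ℓ z ⁻¹'
      Set.Ioo (arcCoord ℓ z y₁ / 2) ((arcCoord ℓ z y₁ + arcCoord ℓ z y₂) / 2) := by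
  have hu := h.arcCoord_left_neg
  have hv := h.arcCoord_right_pos
  rw [h.voronoi_insert_self]
  ext t
  simp only [Set.mem_inter_iff, Set.mem_preimage, Set.mem_Ioo]
  constructor
  · rintro ⟨ht, h₁, h₂⟩
    exact ⟨h₁, (h.mem_voronoi_iff ⟨by linarith, by linarith⟩).1.1 ht⟩
  · rintro ⟨h₁, h₂⟩
    exact ⟨(h.mem_voronoi_iff ⟨by linarith, by linarith⟩).1.2 h₂, h₁, by linarith⟩

lemma voronoi_right_inter_voronoi_insert_self (h : IsNeighborPair F z y₁ y₂) :
    voronoi ℓ F y₂ ∩ voronoi ℓ (insert z F) z = arcCoord ℓ z ⁻¹'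
      Set.Ioo ((arcCoord ℓ z y₁ + arcCoord ℓ z y₂) / 2) (arcCoord ℓ z y₂ / 2) := by
  have hu := h.arcCoord_left_neg
  have hv := h.arcCoord_right_pos
  rw [h.voronoi_insert_self]
  ext t
  simp only [Set.mem_inter_iff, Set.mem_preimage, Set.mem_Ioo]
  constructor
  · rintro ⟨ht, h₁, h₂⟩
    exact ⟨(h.mem_voronoi_iff ⟨by linarith, by linarith⟩).2.1 ht, h₂⟩
  · rintro ⟨h₁, h₂⟩
    exact ⟨(h.mem_voronoi_iff ⟨by linarith, by linarith⟩).2.2 h₁, by linarith, h₂⟩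

lemma voronoi_inter_voronoi_insert_self_eq_empty (h : IsNeighborPair F z y₁ y₂) (hy : y ∈ F)
    (hy₁ : y ≠ y₁) (hy₂ : y ≠ y₂) : voronoi ℓ F y ∩ voronoi ℓ (insert z F) z = ∅ := by
  have hu := h.arcCoord_left_neg
  have hv := h.arcCoord_right_pos
  rw [h.voronoi_insert_self]
  refine Set.eq_empty_of_forall_notMem fun t ⟨ht, h₁, h₂⟩ => ?_
  rcases h.dist_lt_or_dist_lt ⟨by linarith, by linarith⟩ hy hy₁ hy₂ with h' | h'
  · exact h'.not_gt (ht y₁ h.left_mem hy₁.symm)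
  · exact h'.not_gt (ht y₂ h.right_mem hy₂.symm)

lemma sum_mul_volume_voronoi_inter_voronoi_insert_self (h : IsNeighborPair F z y₁ y₂)
    (w : AddCircle ℓ → ℝ) :
    ∑ y ∈ F, w y * (volume (voronoi ℓ F y ∩ voronoi ℓ (insert z F) z)).toReal =
      w y₁ * (arcCoord ℓ z y₂ / 2) + w y₂ * (-arcCoord ℓ z y₁ / 2) := by
  have hu := h.arcCoord_left_neg
  have hv := h.arcCoord_right_pos
  obtain ⟨hu₁, -⟩ := arcCoord_mem_Ioc z y₁
  obtain ⟨-, hv₂⟩ := arcCoord_mem_Ioc z y₂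
  rw [Finset.sum_eq_add_of_mem y₁ y₂ h.left_mem h.right_mem h.left_ne_right
      fun y hy hne => by
        rw [h.voronoi_inter_voronoi_insert_self_eq_empty hy hne.1 hne.2, measure_empty,
          ENNReal.toReal_zero, mul_zero],
    h.voronoi_left_inter_voronoi_insert_self, h.voronoi_right_inter_voronoi_insert_self,
    volume_preimage_arcCoord_Ioo _ (by linarith) (by linarith),
    volume_preimage_arcCoord_Ioo _ (by linarith) (by linarith),
    ENNReal.toReal_ofReal (by linarith), ENNReal.toReal_ofReal (by linarith)]
  ring

lemma volume_voronoi_insert_self (h : IsNeighborPair F z y₁ y₂) :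
    (volume (voronoi ℓ (insert z F) z)).toReal = (arcCoord ℓ z y₂ - arcCoord ℓ z y₁) / 2 := by
  have hu := h.arcCoord_left_neg
  have hv := h.arcCoord_right_pos
  obtain ⟨hu₁, -⟩ := arcCoord_mem_Ioc z y₁
  obtain ⟨-, hv₂⟩ := arcCoord_mem_Ioc z y₂
  rw [h.voronoi_insert_self, volume_preimage_arcCoord_Ioo _ (by linarith) (by linarith),
    ENNReal.toReal_ofReal (by linarith)]
  ring

end IsNeighborPair

lemma exists_isNeighborPair (hz : z ∉ F) {p₁ p₂ : AddCircle ℓ} (hp₁ : p₁ ∈ F) (hp₂ : p₂ ∈ F)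
    (h₁ : arcCoord ℓ z p₁ < 0) (h₂ : 0 < arcCoord ℓ z p₂) :
    ∃ y₁ y₂, IsNeighborPair F z y₁ y₂ ∧
      arcCoord ℓ z p₁ ≤ arcCoord ℓ z y₁ ∧ arcCoord ℓ z y₂ ≤ arcCoord ℓ z p₂ := by
  classical
  obtain ⟨y₁, hy₁, hmax⟩ := Finset.exists_max_image (F.filter fun y => arcCoord ℓ z y < 0)
    (arcCoord ℓ z) ⟨p₁, Finset.mem_filter.2 ⟨hp₁, h₁⟩⟩
  obtain ⟨y₂, hy₂, hmin⟩ := Finset.exists_min_image (F.filter fun y => 0 < arcCoord ℓ z y)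
    (arcCoord ℓ z) ⟨p₂, Finset.mem_filter.2 ⟨hp₂, h₂⟩⟩
  rw [Finset.mem_filter] at hy₁ hy₂
  refine ⟨y₁, y₂, ⟨hy₁.1, hy₂.1, hy₁.2, hy₂.2, fun y hy ⟨hlo, hhi⟩ => ?_⟩,
    hmax p₁ (Finset.mem_filter.2 ⟨hp₁, h₁⟩), hmin p₂ (Finset.mem_filter.2 ⟨hp₂, h₂⟩)⟩
  rcases lt_trichotomy (arcCoord ℓ z y) 0 with hneg | hzero | hpos
  · exact (hmax y (Finset.mem_filter.2 ⟨hy, hneg⟩)).not_gt hlo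
  · rw [arcCoord_injective z (hzero.trans (arcCoord_self z).symm)] at hy
    exact hz hy
  · exact (hmin y (Finset.mem_filter.2 ⟨hy, hpos⟩)).not_gt hhi

lemma sum_mul_volume_voronoi_inter_of_dist_lt {a : ℝ} {x : AddCircle ℓ} (haℓ : a ≤ ℓ / 2)
    (hx : x ∈ F) (hxl : x - (a : AddCircle ℓ) ∈ F) (hxr : x + (a : AddCircle ℓ) ∈ F)
    (hz : z ∉ F) (hzx : dist z x < a) :
    max (a - dist x z) 0 * (volume (voronoi ℓ (insert z F) z)).toReal =
      ∑ y ∈ F, max (a - dist x y) 0 *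
        (volume (voronoi ℓ F y ∩ voronoi ℓ (insert z F) z)).toReal := by
  set c := arcCoord ℓ z x
  have hc : |c| < a := by rwa [← dist_eq_abs_arcCoord, dist_comm]
  obtain ⟨hc₁, hc₂⟩ := abs_lt.1 hc
  have hc₀ : c ≠ 0 := fun h => hz (arcCoord_injective z (h.trans (arcCoord_self z).symm) ▸ hx)
  have hshift (s : ℝ) (hs : s ∈ Set.Ioc (-(ℓ / 2)) (ℓ / 2)) :
      arcCoord ℓ z (x + (s - c : ℝ)) = s := by
    rw [← add_arcCoord z x, add_assoc, ← AddCircle.coe_add, add_sub_cancel, arcCoord_add_coe z hs]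
  obtain ⟨y₁, y₂, hN, hu, hv⟩ : ∃ y₁ y₂, IsNeighborPair F z y₁ y₂ ∧
      |c - arcCoord ℓ z y₁| ≤ a ∧ |c - arcCoord ℓ z y₂| ≤ a := by
    rcases hc₀.lt_or_gt with hneg | hpos
    · have hxr' : arcCoord ℓ z (x + (a : AddCircle ℓ)) = c + a := by
        simpa using hshift (c + a) ⟨by linarith, by linarith⟩
      obtain ⟨y₁, y₂, hN, h₁, h₂⟩ := exists_isNeighborPair hz hx hxr hneg (by linarith)
      exact ⟨y₁, y₂, hN, abs_le.2 ⟨by linarith [hN.arcCoord_left_neg], by linarith⟩,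
        abs_le.2 ⟨by linarith, by linarith [hN.arcCoord_right_pos]⟩⟩
    · have hxl' : arcCoord ℓ z (x - (a : AddCircle ℓ)) = c - a := by
        simpa [sub_eq_add_neg] using hshift (c - a) ⟨by linarith, by linarith⟩
      obtain ⟨y₁, y₂, hN, h₁, h₂⟩ := exists_isNeighborPair hz hxl hx (by linarith) hpos
      exact ⟨y₁, y₂, hN, abs_le.2 ⟨by linarith [hN.arcCoord_left_neg], by linarith⟩,
        abs_le.2 ⟨by linarith, by linarith [hN.arcCoord_right_pos]⟩⟩
  have hw (y : AddCircle ℓ) (hy : |c - arcCoord ℓ z y| ≤ a) :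
      max (a - dist x y) 0 = a - |c - arcCoord ℓ z y| := by
    rw [dist_eq_norm_arcCoord_sub z, norm_coe_eq_abs_of_abs_le (hy.trans haℓ),
      max_eq_left (by linarith)]
  rw [hN.sum_mul_volume_voronoi_inter_voronoi_insert_self, hN.volume_voronoi_insert_self,
    hw z (by simpa using hc.le), hw y₁ hu, hw y₂ hv, arcCoord_self, sub_zero]
  exact sub_abs_mul_eq_of_notMem_Ioo hN.arcCoord_left_neg hN.arcCoord_right_pos
    (hN.arcCoord_notMem x hx)

end Voronoi

theorem g_add_point_general (ℓ : ℝ) [Fact (0 < ℓ)] (a : ℝ) (haℓ : a ≤ ℓ / 2)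
    (x : AddCircle ℓ) (ζ : AddCircle ℓ →₀ ℕ)
    (hx : x ∈ ζ.support) (hxl : x - (a : ℝ) ∈ ζ.support) (hxr : x + (a : ℝ) ∈ ζ.support)
    (hg : g ℓ a x ζ = a ^ 2) (z : AddCircle ℓ) :
    g ℓ a x (ζ + Finsupp.single z 1) = a ^ 2 := by
  have hsupp : (ζ + Finsupp.single z 1).support = insert z ζ.support := by
    rw [Finsupp.support_add_eq_union, Finsupp.support_single _ one_ne_zero,
      Finset.union_comm, ← Finset.insert_eq]
  by_cases hz : z ∈ ζ.support
  · rwa [g, hsupp, Finset.insert_eq_of_mem hz]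
  rw [g, hsupp, sum_mul_volume_voronoi_insert _ hz, ← g, hg, add_eq_left, sub_eq_zero]
  rcases le_or_gt a (dist z x) with hzx | hzx
  · exact sum_mul_volume_voronoi_inter_of_le_dist haℓ hxl hxr hz hzx
  · exact sum_mul_volume_voronoi_inter_of_dist_lt haℓ hx hxl hxr hz hzx

/-- Adding a point preserves the interpolation identity: if `ζ` has atoms at `x-a`, `x`, `x+a`
and `g(x,ζ) = a²`, then `g(x, ζ + δ_z) = a²` for every `z`. -/
theorem g_add_point (ℓ : ℝ) [Fact (0 < ℓ)] (a : ℝ) (ha : 0 < a) (haℓ : a ≤ ℓ / 2)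
    (x : AddCircle ℓ) (ζ : AddCircle ℓ →₀ ℕ)
    (hx : x ∈ ζ.support) (hxl : x - (a : ℝ) ∈ ζ.support) (hxr : x + (a : ℝ) ∈ ζ.support)
    (hg : g ℓ a x ζ = a ^ 2) (z : AddCircle ℓ) :
    g ℓ a x (ζ + Finsupp.single z 1) = a ^ 2 :=
  g_add_point_general ℓ a haℓ x ζ hx hxl hxr hg z
end

section
/- Key interpolation inequality: assume 0 < a ≤ min(ℓ/2, 2r). Then for every finite counting measure ζ on the circle S and every atom x of ζ, ∑_{y ∈ supp ζ} (a - d(x,y))₊ · length(B_r(y) ∩ Γ_ζ(y)) ≥ a². -/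
open Finset MeasureTheory Set

section
noncomputable def vlo (F : Finset ℝ) (t : ℝ) : ℝ := sSup ↑(F.filter (fun s => s < t))
noncomputable def vhi (F : Finset ℝ) (t : ℝ) : ℝ := sInf ↑(F.filter (fun s => t < s))
variable {F : Finset ℝ} {t c s : ℝ}
lemma vlo_mem (hc : c ∈ F) (hct : c < t) : vlo F t ∈ F ∧ vlo F t < t := by
  have hne : (↑(F.filter (fun s => s < t)) : Set ℝ).Nonempty := ⟨c, by simp [hc, hct]⟩
  have := hne.csSup_mem (F.filter _).finite_toSet
  simp only [Finset.mem_coe, Finset.mem_filter] at this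
  exact ⟨this.1, this.2⟩
lemma vlo_ge (hs : s ∈ F) (h : s < t) : s ≤ vlo F t :=
  le_csSup ((F.filter _).finite_toSet.bddAbove) (by simp [hs, h])
lemma vhi_mem (hc : c ∈ F) (hct : t < c) : vhi F t ∈ F ∧ t < vhi F t := by
  have hne : (↑(F.filter (fun s => t < s)) : Set ℝ).Nonempty := ⟨c, by simp [hc, hct]⟩
  have := hne.csInf_mem (F.filter _).finite_toSet
  simp only [Finset.mem_coe, Finset.mem_filter] at this
  exact ⟨this.1, this.2⟩
lemma vhi_le (hs : s ∈ F) (h : t < s) : vhi F t ≤ s :=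
  csInf_le ((F.filter _).finite_toSet.bddBelow) (by simp [hs, h])
lemma vhi_eq (hc : c ∈ F) (hct : t < c) (hmin : ∀ s ∈ F, t < s → c ≤ s) : vhi F t = c := by
  refine le_antisymm (vhi_le hc hct) ?_
  obtain ⟨h1, h2⟩ := vhi_mem hc hct
  exact hmin _ h1 h2
lemma vlo_eq (hc : c ∈ F) (hct : c < t) (hmax : ∀ s ∈ F, s < t → s ≤ c) : vlo F t = c := by
  refine le_antisymm ?_ (vlo_ge hc hct)
  obtain ⟨h1, h2⟩ := vlo_mem hc hct
  exact hmax _ h1 h2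
end

lemma key_sum (a : ℝ) (ha : 0 < a) (F : Finset ℝ) :
    (-a) ∈ F → (0:ℝ) ∈ F → a ∈ F → (∀ t ∈ F, |t| ≤ a) →
    ∑ t ∈ F, max (a - |t|) 0 * ((vhi F t - vlo F t)/2) = a^2 := by
  induction F using Finset.strongInduction with
  | _ F IH =>
  intro hma h0a hpa hb
  by_cases hsub : F ⊆ {-a, 0, a}
  · -- base case : F = {-a, 0, a}
    have hF : F = {-a, 0, a} := by
      apply Finset.Subset.antisymm hsub
      intro s hs
      simp only [Finset.mem_insert, Finset.mem_singleton] at hs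
      rcases hs with rfl | rfl | rfl <;> assumption
    subst hF
    have h1 : ({-a, 0, a} : Finset ℝ).filter (fun s => s < 0) = {-a} := by
      ext s
      simp only [Finset.mem_filter, Finset.mem_insert, Finset.mem_singleton]
      constructor
      · rintro ⟨rfl | rfl | rfl, h⟩ <;> [rfl; linarith; linarith]
      · rintro rfl; exact ⟨Or.inl rfl, by linarith⟩
    have h2 : ({-a, 0, a} : Finset ℝ).filter (fun s => 0 < s) = {a} := by
      ext s
      simp only [Finset.mem_filter, Finset.mem_insert, Finset.mem_singleton]
      constructor
      · rintro ⟨rfl | rfl | rfl, h⟩ <;> [linarith; linarith; rfl]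
      · rintro rfl; exact ⟨Or.inr (Or.inr rfl), by linarith⟩
    have hv : vhi {-a, 0, a} (0:ℝ) = a := by rw [vhi, h2]; simp
    have hl : vlo {-a, 0, a} (0:ℝ) = -a := by rw [vlo, h1]; simp
    rw [Finset.sum_insert (by simp; constructor <;> intro h <;> linarith),
      Finset.sum_insert (by simp; intro h; linarith), Finset.sum_singleton]
    rw [hv, hl]
    simp only [abs_neg, abs_of_pos ha, abs_zero, sub_self, max_self, sub_zero]
    rw [max_eq_left ha.le]
    ring
  · -- inductive step
    obtain ⟨t₀, ht₀F, ht₀⟩ := Finset.not_subset.mp hsub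
    simp only [Finset.mem_insert, Finset.mem_singleton, not_or] at ht₀
    obtain ⟨ht₀m, ht₀0, ht₀p⟩ := ht₀
    set F' := F.erase t₀ with hF'
    have hmF' : (-a) ∈ F' := Finset.mem_erase.mpr ⟨fun h => ht₀m h.symm, hma⟩
    have h0F' : (0:ℝ) ∈ F' := Finset.mem_erase.mpr ⟨fun h => ht₀0 h.symm, h0a⟩
    have hpF' : a ∈ F' := Finset.mem_erase.mpr ⟨fun h => ht₀p h.symm, hpa⟩
    have hbt₀ := hb t₀ ht₀F
    have ht₀a : -a < t₀ ∧ t₀ < a := by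
      rw [abs_le] at hbt₀
      constructor
      · rcases lt_or_eq_of_le hbt₀.1 with h | h
        · exact h
        · exact absurd h.symm ht₀m
      · rcases lt_or_eq_of_le hbt₀.2 with h | h
        · exact h
        · exact absurd h ht₀p
    set u := vlo F t₀ with hu
    set v := vhi F t₀ with hv
    obtain ⟨huF, hut⟩ := vlo_mem hma ht₀a.1
    obtain ⟨hvF, htv⟩ := vhi_mem hpa ht₀a.2
    have huv : u < v := hut.trans htv
    have huF' : u ∈ F' := Finset.mem_erase.mpr ⟨hut.ne, huF⟩
    have hvF' : v ∈ F' := Finset.mem_erase.mpr ⟨htv.ne', hvF⟩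
    -- no element of F strictly between u and t₀, or t₀ and v
    have hgap1 : ∀ s ∈ F, s < t₀ → s ≤ u := fun s hs h => vlo_ge hs h
    have hgap2 : ∀ s ∈ F, t₀ < s → v ≤ s := fun s hs h => vhi_le hs h
    -- key vhi/vlo computations
    have e1 : vhi F' u = v := by
      refine vhi_eq hvF' huv ?_
      intro s hs hus
      obtain ⟨hst₀, hsF⟩ := Finset.mem_erase.mp hs
      rcases lt_trichotomy s t₀ with h | h | h
      · exact absurd (hgap1 s hsF h) (not_le.mpr hus)
      · exact absurd h hst₀
      · exact hgap2 s hsF h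
    have e2 : vhi F u = t₀ := by
      refine vhi_eq ht₀F hut ?_
      intro s hs hus
      rcases lt_trichotomy s t₀ with h | h | h
      · exact absurd (hgap1 s hs h) (not_le.mpr hus)
      · exact h.ge
      · exact htv.le.trans (hgap2 s hs h)
    have e3 : vlo F' v = u := by
      refine vlo_eq huF' huv ?_
      intro s hs hsv
      obtain ⟨hst₀, hsF⟩ := Finset.mem_erase.mp hs
      rcases lt_trichotomy s t₀ with h | h | h
      · exact hgap1 s hsF h
      · exact absurd h hst₀
      · exact absurd (hgap2 s hsF h) (not_le.mpr hsv)
    have e4 : vlo F v = t₀ := by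
      refine vlo_eq ht₀F htv ?_
      intro s hs hsv
      rcases lt_trichotomy s t₀ with h | h | h
      · exact (hgap1 s hs h).trans hut.le
      · exact h.le
      · exact absurd (hgap2 s hs h) (not_le.mpr hsv)
    have filter_eq : ∀ (p : ℝ → Prop) [DecidablePred p], ¬ p t₀ →
        F'.filter p = F.filter p := by
      intro p _ hp
      ext s
      simp only [Finset.mem_filter, Finset.mem_erase, hF']
      constructor
      · rintro ⟨⟨_, h1⟩, h2⟩; exact ⟨h1, h2⟩
      · rintro ⟨h1, h2⟩
        refine ⟨⟨?_, h1⟩, h2⟩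
        rintro rfl
        exact hp h2
    have e5 : vlo F' u = vlo F u := by
      unfold vlo
      rw [filter_eq (fun s => s < u) (not_lt.mpr hut.le)]
    have e6 : vhi F' v = vhi F v := by
      unfold vhi
      rw [filter_eq (fun s => v < s) (not_lt.mpr htv.le)]
    have e7hi : ∀ t ∈ F', t ≠ u → t ≠ v → vhi F' t = vhi F t := by
      intro t ht htu htv'
      have htF := (Finset.mem_erase.mp ht).2
      have htt₀ : t ≠ t₀ := (Finset.mem_erase.mp ht).1
      rcases lt_or_gt_of_ne htt₀ with hlt | hgt
      · have htu' : t < u := lt_of_le_of_ne (hgap1 t htF hlt) htu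
        obtain ⟨hwF, htw⟩ := vhi_mem huF htu'
        have hwu : vhi F t ≤ u := vhi_le huF htu'
        refine vhi_eq (Finset.mem_erase.mpr ⟨(hwu.trans_lt hut).ne, hwF⟩) htw ?_
        intro s hs hts
        exact vhi_le (Finset.mem_erase.mp hs).2 hts
      · unfold vhi
        rw [filter_eq (fun s => t < s) (not_lt.mpr hgt.le)]
    have e7lo : ∀ t ∈ F', t ≠ u → t ≠ v → vlo F' t = vlo F t := by
      intro t ht htu htv'
      have htF := (Finset.mem_erase.mp ht).2
      have htt₀ : t ≠ t₀ := (Finset.mem_erase.mp ht).1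
      rcases lt_or_gt_of_ne htt₀ with hlt | hgt
      · unfold vlo
        rw [filter_eq (fun s => s < t) (not_lt.mpr hlt.le)]
      · have htv'' : v < t := lt_of_le_of_ne (hgap2 t htF hgt) (Ne.symm htv')
        obtain ⟨hwF, htw⟩ := vlo_mem hvF htv''
        have hwv : v ≤ vlo F t := vlo_ge hvF htv''
        refine vlo_eq (Finset.mem_erase.mpr ⟨(htv.trans_le hwv).ne', hwF⟩) htw ?_
        intro s hs hts
        exact vlo_ge (Finset.mem_erase.mp hs).2 hts
    -- sum splitting
    set g : Finset ℝ → ℝ → ℝ := fun F₀ t => max (a - |t|) 0 * ((vhi F₀ t - vlo F₀ t)/2) with hg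
    set F'' := (F'.erase u).erase v with hF''
    have huv' : v ∈ F'.erase u := Finset.mem_erase.mpr ⟨huv.ne', hvF'⟩
    have hsum1 : ∑ t ∈ F, g F t = g F t₀ + (g F u + (g F v + ∑ t ∈ F'', g F t)) := by
      rw [← Finset.add_sum_erase _ _ ht₀F, ← Finset.add_sum_erase _ _ huF',
        ← Finset.add_sum_erase _ _ huv']
    have hsum2 : ∑ t ∈ F', g F' t = g F' u + (g F' v + ∑ t ∈ F'', g F' t) := by
      rw [← Finset.add_sum_erase _ _ huF', ← Finset.add_sum_erase _ _ huv']
    have hsame : ∑ t ∈ F'', g F t = ∑ t ∈ F'', g F' t := by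
      refine Finset.sum_congr rfl ?_
      intro t ht
      have ht1 := Finset.mem_erase.mp ht
      have ht2 := Finset.mem_erase.mp ht1.2
      rw [hg]
      dsimp only
      rw [e7hi t ht2.2 ht2.1 ht1.1, e7lo t ht2.2 ht2.1 ht1.1]
    have hIH : ∑ t ∈ F', g F' t = a^2 := by
      refine IH F' (Finset.erase_ssubset ht₀F) hmF' h0F' hpF' ?_
      intro t ht
      exact hb t (Finset.mem_erase.mp ht).2
    -- evaluate the g's
    have hvt₀ : vhi F t₀ = v := rfl
    have hlt₀ : vlo F t₀ = u := rfl
    -- the affine identity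
    have hfu : |u| ≤ a := abs_le.mpr ⟨by linarith [abs_le.mp (hb u huF)], by linarith [abs_le.mp (hb u huF)]⟩
    have hfv : |v| ≤ a := hb v hvF
    have key : max (a - |t₀|) 0 * ((v - u)/2) + max (a - |u|) 0 * ((t₀ - v)/2)
        + max (a - |v|) 0 * ((u - t₀)/2) = 0 := by
      rcases lt_or_gt_of_ne ht₀0 with hneg | hpos
      · -- t₀ < 0, so v ≤ 0, and -a ≤ u
        have hv0 : v ≤ 0 := vhi_le h0a hneg
        have hu0 : u < 0 := hut.trans hneg
        have hua : -a ≤ u := (abs_le.mp (hb u huF)).1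
        have hva : -a ≤ v := by linarith [hu0, hua, huv]
        rw [abs_of_nonpos hneg.le, abs_of_nonpos hu0.le, abs_of_nonpos hv0,
          max_eq_left (by linarith [ht₀a.1]), max_eq_left (by linarith),
          max_eq_left (by linarith)]
        ring
      · -- t₀ > 0, so 0 ≤ u, v ≤ a
        have hu0 : 0 ≤ u := vlo_ge h0a hpos
        have hv0 : 0 < v := hpos.trans htv
        have hval : v ≤ a := (abs_le.mp (hb v hvF)).2
        have hua : u ≤ a := by linarith [huv]
        rw [abs_of_pos hpos, abs_of_nonneg hu0, abs_of_pos hv0,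
          max_eq_left (by linarith [ht₀a.2]), max_eq_left (by linarith),
          max_eq_left (by linarith)]
        ring
    -- put it together
    have hgu : g F u - g F' u = max (a - |u|) 0 * ((t₀ - v)/2) := by
      rw [hg]; dsimp only
      rw [e2, e1, e5]
      ring
    have hgv : g F v - g F' v = max (a - |v|) 0 * ((u - t₀)/2) := by
      rw [hg]; dsimp only
      rw [e4, e3, e6]
      ring
    have hgt₀ : g F t₀ = max (a - |t₀|) 0 * ((v - u)/2) := by
      rw [hg]
    calc ∑ t ∈ F, g F t = g F t₀ + (g F u + (g F v + ∑ t ∈ F'', g F t)) := hsum1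
      _ = a^2 := by
          rw [hsame]
          have := hsum2 ▸ hIH
          linarith [hgu, hgv, hgt₀, key, this]

section circlelemmas
variable {ℓ : ℝ} [hℓfact : Fact (0 < ℓ)]

lemma norm_coe_eq_my (w : ℝ) (h : |w| ≤ ℓ/2) : ‖(w : AddCircle ℓ)‖ = |w| := by
  have hℓ : (0:ℝ) < ℓ := hℓfact.out
  rw [AddCircle.norm_coe_eq_abs_iff (p := ℓ) hℓ.ne']
  rwa [abs_of_pos hℓ]

lemma norm_coe_ge_my (w : ℝ) (h : |w| ≤ ℓ) : min |w| (ℓ - |w|) ≤ ‖(w : AddCircle ℓ)‖ := by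
  have hℓ : (0:ℝ) < ℓ := hℓfact.out
  rw [AddCircle.norm_eq]
  obtain ⟨k, hk⟩ : ∃ k : ℤ, round (ℓ⁻¹ * w) = k := ⟨_, rfl⟩
  rw [hk]
  have h1 : |ℓ⁻¹ * w| ≤ 1 := by
    rw [abs_mul, abs_of_pos (inv_pos.mpr hℓ)]
    rw [inv_mul_le_iff₀ hℓ]
    simpa using h
  have h2 : |(k : ℝ)| ≤ 3/2 := by
    have h4 := abs_sub_round (ℓ⁻¹ * w)
    rw [hk] at h4
    have h5 : |(k:ℝ)| - |ℓ⁻¹ * w| ≤ |ℓ⁻¹ * w - k| := by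
      rw [abs_sub_comm]
      exact abs_sub_abs_le_abs_sub _ _
    linarith
  have h3 : k = -1 ∨ k = 0 ∨ k = 1 := by
    have hk2 : |k| ≤ 1 := by
      by_contra hcon
      push_neg at hcon
      have : (2:ℝ) ≤ |(k:ℝ)| := by
        rw [← Int.cast_abs]
        exact_mod_cast hcon
      linarith
    have := abs_le.mp hk2
    omega
  rcases h3 with rfl | rfl | rfl
  · have he : |w - (-1 : ℤ) * ℓ| = |w + ℓ| := by norm_num
    rw [he]
    refine le_trans (min_le_right _ _) ?_
    rcases abs_cases w with ⟨hw, _⟩ | ⟨hw, _⟩ <;> rcases abs_cases (w + ℓ) with ⟨h6, _⟩ | ⟨h6, _⟩ <;> linarith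
  · simpa using min_le_left |w| (ℓ - |w|)
  · have he : |w - (1 : ℤ) * ℓ| = |w - ℓ| := by norm_num
    rw [he]
    refine le_trans (min_le_right _ _) ?_
    rcases abs_cases w with ⟨hw, _⟩ | ⟨hw, _⟩ <;> rcases abs_cases (w - ℓ) with ⟨h6, _⟩ | ⟨h6, _⟩ <;> linarith

end circlelemmas

/-- Key interpolation inequality: for `0 < a ≤ min(ℓ/2, 2r)`, every finite counting measure
`ζ` and every atom `x` of `ζ`,
`∑_y (a - d(x,y))₊ · length(B_r(y) ∩ Γ_ζ(y)) ≥ a²`. -/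
theorem key_interpolation_inequality (ℓ : ℝ) [Fact (0 < ℓ)] (a r : ℝ) (ha : 0 < a)
    (haℓ : a ≤ ℓ / 2) (har : a ≤ 2 * r)
    (ζ : AddCircle ℓ →₀ ℕ) (x : AddCircle ℓ) (hx : x ∈ ζ.support) :
    a ^ 2 ≤ ∑ y ∈ ζ.support,
      max (a - dist x y) 0 * (volume (Metric.ball y r ∩ voronoi ℓ ζ.support y)).toReal := by
  classical
  have hℓ : (0:ℝ) < ℓ := Fact.out
  set T := ζ.support with hT
  -- lift of x
  set xt : ℝ := ((AddCircle.equivIoc ℓ (-(ℓ/2)) x : ℝ)) with hxtdef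
  have hxt : ((xt : ℝ) : AddCircle ℓ) = x := (AddCircle.equivIoc ℓ (-(ℓ/2))).symm_apply_apply x
  -- lift of atoms relative to x
  set ρ : AddCircle ℓ → ℝ := fun y => ((AddCircle.equivIoc ℓ (-(ℓ/2)) (y - x) : ℝ)) with hρdef
  have hρ_mem : ∀ y, ρ y ∈ Set.Ioc (-(ℓ/2)) (ℓ/2) := by
    intro y
    have h := (AddCircle.equivIoc ℓ (-(ℓ/2)) (y - x)).2
    exact ⟨h.1, by linarith [h.2]⟩
  have hρ_coe : ∀ y, ((ρ y : ℝ) : AddCircle ℓ) = y - x := fun y =>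
    (AddCircle.equivIoc ℓ (-(ℓ/2))).symm_apply_apply (y - x)
  have hρ_abs : ∀ y, |ρ y| ≤ ℓ/2 := by
    intro y
    have h := hρ_mem y
    rw [abs_le]
    exact ⟨(h.1).le, h.2⟩
  have hρ_dist : ∀ y, dist x y = |ρ y| := by
    intro y
    rw [dist_comm, dist_eq_norm, ← norm_coe_eq_my (ρ y) (hρ_abs y), hρ_coe]
  have hρ_inj : ∀ y y', ρ y = ρ y' → y = y' := by
    intro y y' h
    have h2 : y - x = y' - x := by rw [← hρ_coe y, ← hρ_coe y', h]
    exact sub_left_injective h2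
  -- the close atoms and the real configuration
  set C := T.filter (fun y => dist x y < a) with hC
  set G : Finset ℝ := insert (-a) (insert a (C.image ρ)) with hGdef
  have himg : ∀ t ∈ C.image ρ, |t| < a := by
    intro t ht
    obtain ⟨y, hy, rfl⟩ := Finset.mem_image.mp ht
    rw [← hρ_dist]
    exact (Finset.mem_filter.mp hy).2
  have hGm : (-a) ∈ G := Finset.mem_insert_self _ _
  have hGp : a ∈ G := Finset.mem_insert_of_mem (Finset.mem_insert_self _ _)
  have hxC : x ∈ C := Finset.mem_filter.mpr ⟨hx, by simp [ha]⟩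
  have hρx : ρ x = 0 := by
    have := hρ_dist x
    rw [dist_self] at this
    exact abs_eq_zero.mp this.symm
  have hG0 : (0:ℝ) ∈ G := by
    refine Finset.mem_insert_of_mem (Finset.mem_insert_of_mem ?_)
    exact Finset.mem_image.mpr ⟨x, hxC, hρx⟩
  have hGb : ∀ t ∈ G, |t| ≤ a := by
    intro t ht
    rcases Finset.mem_insert.mp ht with rfl | ht
    · rw [abs_neg, abs_of_pos ha]
    rcases Finset.mem_insert.mp ht with rfl | ht
    · rw [abs_of_pos ha]
    · exact (himg t ht).le
  -- the per-atom geometric bound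
  have hmain : ∀ y ∈ C, (vhi G (ρ y) - vlo G (ρ y))/2
      ≤ (volume (Metric.ball y r ∩ voronoi ℓ T y)).toReal := by
    intro y hyC
    have htG : ρ y ∈ G := Finset.mem_insert_of_mem (Finset.mem_insert_of_mem
      (Finset.mem_image.mpr ⟨y, hyC, rfl⟩))
    have hta : |ρ y| < a := himg _ (Finset.mem_image.mpr ⟨y, hyC, rfl⟩)
    set t := ρ y with htdef
    have htlt := abs_lt.mp hta
    obtain ⟨huG, hut⟩ := vlo_mem hGm htlt.1
    obtain ⟨hvG, htv⟩ := vhi_mem hGp htlt.2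
    set u := vlo G t with hudef
    set v := vhi G t with hvdef
    have hub := abs_le.mp (hGb u huG)
    have hvb := abs_le.mp (hGb v hvG)
    set J : Set ℝ := Set.Ioo (xt + (u+t)/2) (xt + (t+v)/2) with hJdef
    -- properties of points of J
    have hzprop : ∀ w ∈ J, |w - xt - t| < |w - xt| + a ∧ |w - xt| < a ∧
        |w - xt - t| < a - |w - xt| ∧ 2 * |w - xt - t| < a ∧
        (∀ s ∈ G, s ≠ t → |w - xt - t| < |w - xt - s|) := by
      intro w hw
      set z := w - xt with hzdef
      have hz1 : (u+t)/2 < z := by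
        have := hw.1
        simp only [hzdef]
        linarith
      have hz2 : z < (t+v)/2 := by
        have := hw.2
        simp only [hzdef]
        linarith
      have hzs : ∀ s ∈ G, s ≠ t → |z - t| < |z - s| := by
        intro s hsG hst
        rcases lt_or_gt_of_ne hst with hlt | hgt
        · have hsu : s ≤ u := vlo_ge hsG hlt
          have h1 : |z - t| < z - s := by
            rw [abs_sub_lt_iff]
            constructor <;> linarith
          calc |z - t| < z - s := h1
            _ ≤ |z - s| := le_abs_self _
        · have hsv : v ≤ s := vhi_le hsG hgt
          have h1 : |z - t| < s - z := by
            rw [abs_sub_lt_iff]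
            constructor <;> linarith
          calc |z - t| < s - z := h1
            _ ≤ |z - s| := by rw [abs_sub_comm]; exact le_abs_self _
      have hza : |z| < a := by
        rw [abs_lt]
        constructor <;> [linarith [hub.1, htlt.1]; linarith [hvb.2, htlt.2]]
      have hz3 : |z - t| < a - |z| := by
        have h1 := hzs a hGp htlt.2.ne'
        have h2 := hzs (-a) hGm htlt.1.ne
        have e1 : |z - a| = a - z := by
          rw [abs_sub_comm, abs_of_pos (by linarith [abs_lt.mp hza] : (0:ℝ) < a - z)]
        have e2 : |z - (-a)| = z + a := by
          rw [sub_neg_eq_add, abs_of_pos (by linarith [abs_lt.mp hza] : (0:ℝ) < z + a)]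
        rcases abs_cases z with ⟨hc, _⟩ | ⟨hc, _⟩ <;> rw [hc] <;>
          [linarith [h1, e1]; linarith [h2, e2]]
      have hz4 : 2 * |z - t| < a := by
        by_cases ht0 : t = 0
        · rw [ht0, sub_zero]
          rw [ht0, sub_zero] at hz3
          linarith
        · have := hzs 0 hG0 (Ne.symm ht0)
          rw [sub_zero] at this
          linarith [hz3]
      exact ⟨by linarith [hz3, abs_nonneg z, abs_nonneg (z-t)], hza, hz3, hz4, hzs⟩
    -- subset claim
    have hsub : (((↑) : ℝ → AddCircle ℓ) '' J) ⊆ Metric.ball y r ∩ voronoi ℓ T y := by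
      rintro _ ⟨w, hw, rfl⟩
      obtain ⟨hz0, hza, hz3, hz4, hzs⟩ := hzprop w hw
      set z := w - xt with hzdef
      have hyd : ((w:ℝ) : AddCircle ℓ) - y = ((z - t : ℝ) : AddCircle ℓ) := by
        rw [AddCircle.coe_sub, AddCircle.coe_sub, hρ_coe y, hxt]
        abel
      have hdisty : dist ((w:ℝ) : AddCircle ℓ) y = |z - t| := by
        rw [dist_eq_norm, hyd, norm_coe_eq_my]
        linarith [abs_nonneg (z - t)]
      constructor
      · rw [Metric.mem_ball, hdisty]
        linarith
      · intro y' hy'T hy'ne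
        have hyd' : ((w:ℝ) : AddCircle ℓ) - y' = ((z - ρ y' : ℝ) : AddCircle ℓ) := by
          rw [AddCircle.coe_sub, AddCircle.coe_sub, hρ_coe y', hxt]
          abel
        have htri : |z - ρ y'| ≤ |z| + |ρ y'| := by
          rw [sub_eq_add_neg]
          exact (abs_add_le _ _).trans (by rw [abs_neg])
        have habs' : |z - ρ y'| ≤ ℓ := by
          have h5 := hρ_abs y'
          linarith [hza]
        have hlow : min |z - ρ y'| (ℓ - |z - ρ y'|) ≤ dist ((w:ℝ):AddCircle ℓ) y' := by
          rw [dist_eq_norm, hyd']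
          exact norm_coe_ge_my _ habs'
        rw [hdisty]
        refine lt_of_lt_of_le ?_ hlow
        by_cases hy'C : y' ∈ C
        · have hsG : ρ y' ∈ G := Finset.mem_insert_of_mem (Finset.mem_insert_of_mem
            (Finset.mem_image.mpr ⟨y', hy'C, rfl⟩))
          have hst : ρ y' ≠ t := fun h => hy'ne (hρ_inj y' y h)
          have hdxy' : dist x y' < a := (Finset.mem_filter.mp hy'C).2
          rw [hρ_dist y'] at hdxy'
          refine lt_min (hzs _ hsG hst) ?_
          linarith [htri]
        · have hdxy' : a ≤ dist x y' := by
            by_contra hcon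
            push_neg at hcon
            exact hy'C (Finset.mem_filter.mpr ⟨hy'T, hcon⟩)
          rw [hρ_dist y'] at hdxy'
          have h6 : |ρ y'| - |z| ≤ |z - ρ y'| := by
            have h8 := abs_sub_abs_le_abs_sub (ρ y') z
            rwa [abs_sub_comm (ρ y') z] at h8
          have h7 := hρ_abs y'
          exact lt_min (by linarith) (by linarith [htri])
    -- measure computation
    have hJopen : IsOpen J := isOpen_Ioo
    have hmeasSet : MeasurableSet (((↑) : ℝ → AddCircle ℓ) '' J) :=
      (QuotientAddGroup.isOpenMap_coe J hJopen).measurableSet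
    have hpre : (QuotientAddGroup.mk ⁻¹' (((↑) : ℝ → AddCircle ℓ) '' J) : Set ℝ)
        ∩ Set.Ioc (xt - ℓ/2) (xt - ℓ/2 + ℓ) = J := by
      apply Set.Subset.antisymm
      · rintro w ⟨hw1, hw2⟩
        obtain ⟨j, hj, hjw⟩ := hw1
        obtain ⟨k, hk⟩ : ∃ k : ℤ, j - w = k * ℓ := by
          rw [QuotientAddGroup.eq_iff_sub_mem] at hjw
          obtain ⟨k, hk⟩ := AddSubgroup.mem_zmultiples_iff.mp hjw
          exact ⟨k, by rw [← hk, zsmul_eq_mul]⟩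
        have hjlb : xt - ℓ/2 < j := by
          simp only [hJdef, Set.mem_Ioo] at hj
          linarith [hj.1, hub.1, htlt.1]
        have hjub : j < xt - ℓ/2 + ℓ := by
          simp only [hJdef, Set.mem_Ioo] at hj
          linarith [hj.2, hvb.2, htlt.2]
        have hwlb := hw2.1
        have hwub := hw2.2
        have hk0 : k = 0 := by
          have h1 : |j - w| < ℓ := by
            rw [abs_lt]
            constructor <;> linarith
          rw [hk, abs_mul, abs_of_pos hℓ] at h1
          have : |(k:ℝ)| < 1 := by
            by_contra hcon
            push_neg at hcon
            nlinarith
          have hcast : |k| < 1 := by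
            exact_mod_cast this
          have := abs_lt.mp hcast
          omega
        have hwj : w = j := by
          rw [hk0] at hk
          push_cast at hk
          linarith
        rw [hwj]
        exact hj
      · intro w hw
        refine ⟨Set.mem_image_of_mem _ hw, ?_⟩
        simp only [hJdef, Set.mem_Ioo] at hw
        constructor
        · linarith [hw.1, hub.1, htlt.1]
        · linarith [hw.2, hvb.2, htlt.2]
    have hvolJ : volume (((↑) : ℝ → AddCircle ℓ) '' J) = ENNReal.ofReal ((v - u)/2) := by
      rw [AddCircle.add_projection_respects_measure (T := ℓ) (xt - ℓ/2) hmeasSet, hpre, hJdef,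
        Real.volume_Ioo]
      congr 1
      ring
    have hfin : volume (Metric.ball y r ∩ voronoi ℓ T y) ≠ ⊤ := (measure_lt_top (volume : Measure (AddCircle ℓ)) _).ne
    have hmono : volume ((((↑) : ℝ → AddCircle ℓ)) '' J) ≤ volume (Metric.ball y r ∩ voronoi ℓ T y) :=
      measure_mono hsub
    rw [hvolJ] at hmono
    calc (v - u)/2 = (ENNReal.ofReal ((v-u)/2)).toReal := (ENNReal.toReal_ofReal (by linarith)).symm
      _ ≤ _ := ENNReal.toReal_mono hfin hmono
  -- final assembly
  have hkey := key_sum a ha G hGm hG0 hGp hGb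
  have hnot2 : a ∉ C.image ρ := by
    intro h
    have := himg a h
    rw [abs_of_pos ha] at this
    exact lt_irrefl a this
  have hnot1 : (-a) ∉ insert a (C.image ρ) := by
    intro h
    rcases Finset.mem_insert.mp h with h | h
    · linarith
    · have := himg _ h
      rw [abs_neg, abs_of_pos ha] at this
      exact lt_irrefl a this
  have hinj : ∀ y ∈ C, ∀ y' ∈ C, ρ y = ρ y' → y = y' := fun y _ y' _ h => hρ_inj y y' h
  have hsum : ∑ t ∈ G, max (a - |t|) 0 * ((vhi G t - vlo G t)/2)
      = ∑ y ∈ C, max (a - |ρ y|) 0 * ((vhi G (ρ y) - vlo G (ρ y))/2) := by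
    rw [hGdef, Finset.sum_insert hnot1, Finset.sum_insert hnot2, Finset.sum_image hinj]
    rw [abs_neg, abs_of_pos ha, sub_self]
    simp
  rw [← hkey, hsum]
  have step1 : ∑ y ∈ C, max (a - |ρ y|) 0 * ((vhi G (ρ y) - vlo G (ρ y))/2)
      ≤ ∑ y ∈ C, max (a - dist x y) 0 * (volume (Metric.ball y r ∩ voronoi ℓ T y)).toReal := by
    refine Finset.sum_le_sum ?_
    intro y hy
    rw [hρ_dist y]
    exact mul_le_mul_of_nonneg_left (hmain y hy) (le_max_right _ _)
  refine le_trans step1 (Finset.sum_le_sum_of_subset_of_nonneg (Finset.filter_subset _ _) ?_)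
  intro y _ _
  exact mul_nonneg (le_max_right _ _) ENNReal.toReal_nonneg
end

section
/- Quadratic growth after n i.i.d. uniform arrivals: let ζ be a finite counting measure on the circle S of circumference ℓ, 0 < a ≤ ℓ/2, and let X₁,…,Xₙ be i.i.d. uniform on S. Then E‖ζ + ∑_{i=1}^n δ_{X_i}‖_a² = ‖ζ‖_a² + 2n(a²/ℓ)ζ(S) + n·a + (n² - n)(a²/ℓ). -/
open Finset MeasureTheory

/-- The quadratic functional `‖ζ‖ₐ² = ∑∑ ζ(x) ζ(y) (a - d(x,y))₊` of a finite counting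
measure on the circle of circumference `ℓ`. -/
noncomputable def quada (ℓ a : ℝ) (ζ : AddCircle ℓ →₀ ℕ) : ℝ :=
  ∑ x ∈ ζ.support, ∑ y ∈ ζ.support, (ζ x : ℝ) * (ζ y : ℝ) * max (a - dist x y) 0

/-! The pairing `⟨μ, ν⟩ = ∑ₓ ∑ᵧ μ(x) ν(y) (a - d(x, y))₊` is bilinear, so
`‖ζ + ∑ᵢ δ_{Xᵢ}‖² = ‖ζ‖² + 2 ∑ᵢ ⟨ζ, δ_{Xᵢ}⟩ + ∑ᵢ ∑ⱼ (a - d(Xᵢ, Xⱼ))₊`. For uniform `X`, the tent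
`y ↦ (a - d(x, y))₊` has mean `a² / ℓ`: as `a ≤ ℓ / 2` it lies within one period, where it is the
real tent of area `a²`. Hence each cross term has mean `(a² / ℓ) ζ(S)`; the diagonal terms equal
`a`, and by independence the `n² - n` off-diagonal terms have mean `a² / ℓ`. -/

open ProbabilityTheory

lemma intervalIntegral_max_sub_zero {a b : ℝ} (ha : 0 ≤ a) (hab : a ≤ b) :
    ∫ t in 0..b, max (a - t) 0 = a ^ 2 / 2 := by
  have hi : ∀ u v : ℝ, IntervalIntegrable (fun t => max (a - t) 0) volume u v :=
    fun u v => (by fun_prop : Continuous fun t : ℝ => max (a - t) 0).intervalIntegrable u v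
  rw [← intervalIntegral.integral_add_adjacent_intervals (hi 0 a) (hi a b)]
  have hleft : ∫ t in 0..a, max (a - t) 0 = ∫ t in 0..a, (a - t) :=
    intervalIntegral.integral_congr fun t ht => by
      rw [Set.uIcc_of_le ha] at ht
      exact max_eq_left (by linarith [ht.2])
  have hright : ∫ t in a..b, max (a - t) 0 = ∫ t in a..b, (0 : ℝ) :=
    intervalIntegral.integral_congr fun t ht => by
      rw [Set.uIcc_of_le hab] at ht
      exact max_eq_right (by linarith [ht.1])
  rw [hleft, hright, intervalIntegral.integral_sub intervalIntegrable_const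
    intervalIntegral.intervalIntegrable_id]
  simp only [integral_id, intervalIntegral.integral_const, smul_eq_mul]
  ring

lemma intervalIntegral_max_sub_abs {a b : ℝ} (ha : 0 ≤ a) (hab : a ≤ b) :
    ∫ t in (-b)..b, max (a - |t|) 0 = a ^ 2 := by
  have hi : ∀ u v : ℝ, IntervalIntegrable (fun t => max (a - |t|) 0) volume u v :=
    fun u v => (by fun_prop : Continuous fun t : ℝ => max (a - |t|) 0).intervalIntegrable u v
  have hhalf : ∫ t in 0..b, max (a - |t|) 0 = a ^ 2 / 2 := by
    rw [← intervalIntegral_max_sub_zero ha hab]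
    refine intervalIntegral.integral_congr fun t ht => ?_
    rw [Set.uIcc_of_le (ha.trans hab)] at ht
    simp only [abs_of_nonneg ht.1]
  have hneg : ∫ t in (-b)..0, max (a - |t|) 0 = ∫ t in 0..b, max (a - |t|) 0 := by
    simpa using (intervalIntegral.integral_comp_neg (a := 0) (b := b)
      (fun t => max (a - |t|) 0)).symm
  rw [← intervalIntegral.integral_add_adjacent_intervals (hi (-b) 0) (hi 0 b), hneg, hhalf]
  ring

lemma Continuous.integrable_of_compactSpace {α E : Type*} [TopologicalSpace α] [CompactSpace α]
    [MeasurableSpace α] [OpensMeasurableSpace α] [NormedAddCommGroup E] {μ : Measure α}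
    [IsFiniteMeasure μ] {f : α → E} (hf : Continuous f) : Integrable f μ :=
  hf.integrable_of_hasCompactSupport (.of_compactSpace f)

lemma integral_comp_eval_pair {ι X E : Type*} [Fintype ι] [MeasurableSpace X]
    [NormedAddCommGroup E] [NormedSpace ℝ E] {μ : Measure X} [IsProbabilityMeasure μ] {i j : ι}
    (hij : i ≠ j) {f : X × X → E} (hf : AEStronglyMeasurable f (μ.prod μ)) :
    ∫ x, f (x i, x j) ∂Measure.pi (fun _ : ι => μ) = ∫ p, f p ∂μ.prod μ := by
  have hindep : iIndepFun (fun k (x : ι → X) => x k) (Measure.pi fun _ => μ) :=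
    iIndepFun_pi (X := fun _ => id) fun _ => aemeasurable_id
  have hlaw : HasLaw (fun x : ι → X => (x i, x j)) (μ.prod μ) (Measure.pi fun _ => μ) :=
    (hindep.indepFun hij).hasLaw_prod (measurePreserving_eval (fun _ : ι => μ) i).hasLaw
      (measurePreserving_eval (fun _ : ι => μ) j).hasLaw
  exact hlaw.integral_comp hf

lemma sum_sum_ite_eq_const {ι : Type*} [Fintype ι] [DecidableEq ι] (a c : ℝ) :
    ∑ i : ι, ∑ j : ι, (if i = j then a else c)
      = Fintype.card ι * a + ((Fintype.card ι : ℝ) ^ 2 - Fintype.card ι) * c := by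
  have hsplit : ∀ i j : ι, (if i = j then a else c) = c + if i = j then a - c else 0 :=
    fun i j => by split_ifs <;> ring
  simp only [hsplit, sum_add_distrib, sum_ite_eq, mem_univ, if_true, sum_const, card_univ,
    nsmul_eq_mul]
  ring

section TentKernel

variable {α β : Type*} [PseudoMetricSpace α] {a : ℝ}

noncomputable def tentKernel (a : ℝ) (x y : α) : ℝ := max (a - dist x y) 0

lemma tentKernel_comm (x y : α) : tentKernel a x y = tentKernel a y x := by
  rw [tentKernel, tentKernel, dist_comm]

lemma tentKernel_self (ha : 0 ≤ a) (x : α) : tentKernel a x x = a := by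
  rw [tentKernel, dist_self, sub_zero, max_eq_left ha]

@[fun_prop]
lemma Continuous.tentKernel [TopologicalSpace β] {f g : β → α} (hf : Continuous f)
    (hg : Continuous g) : Continuous fun b => tentKernel a (f b) (g b) := by
  unfold _root_.tentKernel; fun_prop

end TentKernel

section KernelPairing

variable {α : Type*} (K : α → α → ℝ)

noncomputable def kernelPairing : (α →₀ ℕ) →ₗ[ℕ] (α →₀ ℕ) →ₗ[ℕ] ℝ :=
  Finsupp.linearCombination ℕ fun x => Finsupp.linearCombination ℕ (K x)

lemma kernelPairing_apply (μ ν : α →₀ ℕ) :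
    kernelPairing K μ ν = ∑ x ∈ μ.support, ∑ y ∈ ν.support, (μ x : ℝ) * ν y * K x y := by
  simp [kernelPairing, Finsupp.linearCombination_apply, Finsupp.sum, LinearMap.sum_apply,
    Finset.mul_sum, mul_assoc]

lemma kernelPairing_single_right (μ : α →₀ ℕ) (y : α) :
    kernelPairing K μ (Finsupp.single y 1) = ∑ x ∈ μ.support, (μ x : ℝ) * K x y := by
  simp [kernelPairing_apply]

lemma kernelPairing_single_single (x y : α) :
    kernelPairing K (Finsupp.single x 1) (Finsupp.single y 1) = K x y := by
  simp [kernelPairing_apply]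

variable {K}

lemma kernelPairing_comm (hK : ∀ x y, K x y = K y x) (μ ν : α →₀ ℕ) :
    kernelPairing K μ ν = kernelPairing K ν μ := by
  rw [kernelPairing_apply, kernelPairing_apply, Finset.sum_comm]
  exact sum_congr rfl fun y _ => sum_congr rfl fun x _ => by rw [hK]; ring

lemma kernelPairing_add_sum_single {ι : Type*} [Fintype ι] (hK : ∀ x y, K x y = K y x)
    (μ : α →₀ ℕ) (x : ι → α) :
    kernelPairing K (μ + ∑ i, Finsupp.single (x i) 1) (μ + ∑ i, Finsupp.single (x i) 1)
      = kernelPairing K μ μ + 2 * ∑ i, kernelPairing K μ (Finsupp.single (x i) 1)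
        + ∑ i, ∑ j, K (x i) (x j) := by
  simp only [map_add, map_sum, LinearMap.add_apply, LinearMap.sum_apply,
    kernelPairing_single_single, kernelPairing_comm hK _ μ, sum_add_distrib]
  rw [Finset.sum_comm (f := fun i j => K (x j) (x i))]
  ring

end KernelPairing

lemma quada_eq_kernelPairing (ℓ a : ℝ) (μ : AddCircle ℓ →₀ ℕ) :
    quada ℓ a μ = kernelPairing (tentKernel a) μ μ :=
  (kernelPairing_apply _ μ μ).symm

namespace AddCircle

variable {ℓ a : ℝ} [Fact (0 < ℓ)]

lemma integral_tentKernel_haarAddCircle (ha : 0 ≤ a) (haℓ : a ≤ ℓ / 2) (x : AddCircle ℓ) :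
    ∫ y, tentKernel a x y ∂(haarAddCircle (T := ℓ)) = a ^ 2 / ℓ := by
  have hℓ : 0 < ℓ := Fact.out
  have htranslate : ∫ y, tentKernel a x y ∂haarAddCircle
      = ∫ y, max (a - ‖y‖) 0 ∂(haarAddCircle (T := ℓ)) := by
    simp_rw [tentKernel, dist_eq_norm, norm_sub_rev x]
    exact integral_sub_right_eq_self (fun y : AddCircle ℓ => max (a - ‖y‖) 0) x
  have hlift : ∫ y : AddCircle ℓ, max (a - ‖y‖) 0
      = ∫ t in (-(ℓ / 2))..(ℓ / 2), max (a - |t|) 0 := by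
    rw [← AddCircle.intervalIntegral_preimage ℓ (-(ℓ / 2)), neg_add_eq_sub, sub_half]
    refine intervalIntegral.integral_congr fun t ht => ?_
    rw [Set.uIcc_of_le (by linarith)] at ht
    have hnorm : ‖(t : AddCircle ℓ)‖ = |t| :=
      (norm_coe_eq_abs_iff ℓ hℓ.ne').2 (by rw [abs_of_pos hℓ, abs_le]; exact ht)
    simp only [hnorm]
  rw [htranslate, integral_haarAddCircle, hlift, intervalIntegral_max_sub_abs ha haℓ,
    smul_eq_mul, inv_mul_eq_div]

lemma integral_sum_tentKernel_haarAddCircle (ha : 0 ≤ a) (haℓ : a ≤ ℓ / 2)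
    (μ : AddCircle ℓ →₀ ℕ) :
    ∫ y, ∑ x ∈ μ.support, (μ x : ℝ) * tentKernel a x y ∂(haarAddCircle (T := ℓ))
      = a ^ 2 / ℓ * ∑ x ∈ μ.support, (μ x : ℝ) := by
  rw [integral_finsetSum _ fun x _ => (by fun_prop : Continuous _).integrable_of_compactSpace,
    mul_sum]
  simp_rw [integral_const_mul, integral_tentKernel_haarAddCircle ha haℓ, mul_comm]

lemma integral_tentKernel_eval_eval {ι : Type*} [Fintype ι] [DecidableEq ι] (ha : 0 ≤ a)
    (haℓ : a ≤ ℓ / 2) (i j : ι) :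
    ∫ X, tentKernel a (X i) (X j) ∂Measure.pi (fun _ : ι => haarAddCircle (T := ℓ))
      = if i = j then a else a ^ 2 / ℓ := by
  split_ifs with hij
  · simp [hij, tentKernel_self ha]
  · rw [integral_comp_eval_pair (f := fun p => tentKernel a p.1 p.2) hij (by fun_prop),
      integral_prod _ (by fun_prop : Continuous _).integrable_of_compactSpace]
    simp [integral_tentKernel_haarAddCircle ha haℓ]

end AddCircle

/-- Quadratic growth after `n` i.i.d. uniform arrivals:
`E‖ζ + ∑ᵢ δ_{Xᵢ}‖ₐ² = ‖ζ‖ₐ² + 2n(a²/ℓ)ζ(S) + n·a + (n²-n)(a²/ℓ)`. -/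
theorem quad_after_n_uniform_arrivals (ℓ : ℝ) [Fact (0 < ℓ)] (a : ℝ) (ha : 0 < a)
    (haℓ : a ≤ ℓ / 2) (n : ℕ) (ζ : AddCircle ℓ →₀ ℕ) :
    (∫ X : Fin n → AddCircle ℓ,
        quada ℓ a (ζ + ∑ i : Fin n, Finsupp.single (X i) 1)
        ∂(Measure.pi fun _ => (AddCircle.haarAddCircle : Measure (AddCircle ℓ))))
      = quada ℓ a ζ + 2 * n * (a ^ 2 / ℓ) * (∑ x ∈ ζ.support, (ζ x : ℝ))
        + n * a + ((n : ℝ) ^ 2 - n) * (a ^ 2 / ℓ) := by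
  set π := Measure.pi fun _ : Fin n => (AddCircle.haarAddCircle : Measure (AddCircle ℓ))
  have hcross (i : Fin n) : ∫ X, ∑ x ∈ ζ.support, (ζ x : ℝ) * tentKernel a x (X i) ∂π
      = a ^ 2 / ℓ * ∑ x ∈ ζ.support, (ζ x : ℝ) :=
    (integral_comp_eval (μ := fun _ => AddCircle.haarAddCircle) (i := i) (by fun_prop)).trans
      (AddCircle.integral_sum_tentKernel_haarAddCircle ha.le haℓ ζ)
  have hpairs (i : Fin n) : ∫ X, ∑ j, tentKernel a (X i) (X j) ∂π
      = ∑ j, if i = j then a else a ^ 2 / ℓ := by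
    rw [integral_finsetSum _ fun j _ => (by fun_prop : Continuous _).integrable_of_compactSpace]
    exact sum_congr rfl fun j _ => AddCircle.integral_tentKernel_eval_eval ha.le haℓ i j
  simp_rw [quada_eq_kernelPairing, kernelPairing_add_sum_single tentKernel_comm,
    kernelPairing_single_right]
  rw [integral_add ?_ ?_, integral_add ?_ ?_, integral_const, integral_const_mul,
    integral_finsetSum _ ?_, integral_finsetSum _ ?_]
  · simp only [hcross, hpairs, sum_sum_ite_eq_const, probReal_univ, one_smul, sum_const,
      card_univ, Fintype.card_fin, nsmul_eq_mul]
    ring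
  all_goals intros; exact (by fun_prop : Continuous _).integrable_of_compactSpace
end

section
/- Polling decreases the quadratic functional: assume 0 < a ≤ min(ℓ/2, 2r) and let ζ be a finite counting measure on the circle S. Then the one-step polling operator satisfies A_p h(ζ) ≤ h(ζ) + a - 2(a²/ℓ)·ζ(S), where h(ζ) = ‖ζ‖_a² and A_p h(ζ) = h(ζ)(1 - k_r(ζ)) + ∑_{x ∈ ζ} h(ζ - δ_x)·m(B_r(x) ∩ Γ_ζ(x)). -/
open Finset MeasureTheory

/-!
Since `h(ζ - δₓ) = h(ζ) - 2⟨ζ, δₓ⟩ₐ + a` and the cells `B_r(x) ∩ Γ_ζ(x)` are disjoint pieces of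
`⋃ₓ B_r(x)`, whose measure is at most `1`, the claim reduces to the interpolation inequality
`∑ₓ (a - d(x, v))₊ m(B_r(x) ∩ Γ_ζ(x)) ≥ a² / ℓ` for every site `v`.

For the latter, cut the circle open at `v` and list the lifts of the sites in increasing order
`v = u₀ ≤ u₁ ≤ ⋯ ≤ uₙ = v + ℓ`. In a gap `[p, q]` the two end arcs of length
`δ = min ((q - p) / 2, r)` lie in the cells of `p` and of `q`, so the gap contributes at least
`δ (w(p) + w(q)) / ℓ`, where `w = (a - d(·, v))₊`. Because `a ≤ 2r`, this dominates the increment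
over `[p, q]` of a primitive of `w`, and these increments add up to `∫ w = a²` over the circle.
-/

open scoped Function

/-- For `0 ≤ s ≤ ℓ` and `a ≤ ℓ / 2` this is `(a - min s (ℓ - s))₊`, i.e. the weight `(a - d)₊`
at the point at arc length `s` from the base point of the cut circle. -/
noncomputable def liftWeight (a ℓ s : ℝ) : ℝ := max (a - s) 0 + max (s - (ℓ - a)) 0

noncomputable def liftWeightPrimitive (a ℓ s : ℝ) : ℝ :=
  a ^ 2 / 2 - max (a - s) 0 ^ 2 / 2 + max (s - (ℓ - a)) 0 ^ 2 / 2

lemma liftWeightPrimitive_self_sub_zero {a ℓ : ℝ} (ha : 0 ≤ a) (haℓ : a ≤ ℓ) :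
    liftWeightPrimitive a ℓ ℓ - liftWeightPrimitive a ℓ 0 = a ^ 2 := by
  simp only [liftWeightPrimitive, sub_zero, zero_sub, max_eq_left ha,
    max_eq_right (sub_nonpos.2 haℓ), max_eq_right (neg_nonpos.2 (sub_nonneg.2 haℓ)),
    sub_sub_cancel]
  ring

/-- The trapezoid rule for the convex weight, and the bound `a ≤ 2r` once the gap exceeds `2r`. -/
lemma liftWeightPrimitive_sub_le {a ℓ r s t : ℝ} (ha : 0 ≤ a) (har : a ≤ 2 * r)
    (hs : 0 ≤ s) (hst : s ≤ t) (ht : t ≤ ℓ) :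
    liftWeightPrimitive a ℓ t - liftWeightPrimitive a ℓ s ≤
      min ((t - s) / 2) r * (liftWeight a ℓ s + liftWeight a ℓ t) := by
  unfold liftWeightPrimitive liftWeight
  set A := max (a - s) 0
  set B := max (a - t) 0
  set C := max (s - (ℓ - a)) 0
  set D := max (t - (ℓ - a)) 0
  have hB : 0 ≤ B := le_max_right _ _
  have hC : 0 ≤ C := le_max_right _ _
  have hBA : B ≤ A := max_le_max (by linarith) le_rfl
  have hCD : C ≤ D := max_le_max (by linarith) le_rfl
  have hAB : A ≤ B + (t - s) := max_le (by linarith [le_max_left (a - t) 0]) (by linarith)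
  have hDC : D ≤ C + (t - s) := max_le (by linarith [le_max_left (s - (ℓ - a)) 0]) (by linarith)
  have hAa : A ≤ a := max_le (by linarith) ha
  have hDa : D ≤ a := max_le (by linarith) ha
  rcases le_total ((t - s) / 2) r with h | h
  · rw [min_eq_left h]
    nlinarith
  · rw [min_eq_right h]
    nlinarith

lemma liftWeight_le_of_le {a ℓ s d : ℝ} (haℓ : a ≤ ℓ / 2) (hds : d ≤ s) (hds' : d ≤ ℓ - s) :
    liftWeight a ℓ s ≤ max (a - d) 0 := by
  unfold liftWeight
  rcases le_total s (ℓ - a) with h | h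
  · rw [max_eq_right (sub_nonpos.2 h), add_zero]
    exact max_le_max (by linarith) le_rfl
  · rw [max_eq_right (by linarith : a - s ≤ 0), zero_add]
    exact max_le_max (by linarith) le_rfl

lemma Fin.sum_succ_sub_castSucc {M : Type*} [AddCommGroup M] {n : ℕ} (f : Fin (n + 1) → M) :
    ∑ i : Fin n, (f i.succ - f i.castSucc) = f (Fin.last n) - f 0 := by
  induction n with
  | zero => simp
  | succ n ih =>
    rw [Fin.sum_univ_castSucc]
    simp only [Fin.succ_castSucc]
    rw [ih (fun i => f i.castSucc), Fin.succ_last, Fin.castSucc_zero]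
    abel

lemma Finset.notMem_Ioo_orderEmbOfFin {α : Type*} [LinearOrder α] (s : Finset α) {n : ℕ}
    (h : s.card = n + 1) (i : Fin n) {x : α} (hx : x ∈ s) :
    x ∉ Set.Ioo (s.orderEmbOfFin h i.castSucc) (s.orderEmbOfFin h i.succ) := by
  obtain ⟨j, rfl⟩ : ∃ j, s.orderEmbOfFin h j = x := by
    rw [← Set.mem_range, range_orderEmbOfFin]
    exact hx
  rintro ⟨h₁, h₂⟩
  rw [OrderEmbedding.lt_iff_lt, Fin.lt_def, Fin.val_castSucc] at h₁
  rw [OrderEmbedding.lt_iff_lt, Fin.lt_def, Fin.val_succ] at h₂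
  omega

lemma pairwise_disjoint_gapEnds {n : ℕ} {u : Fin (n + 1) → ℝ} (hu : Monotone u)
    {δ : Fin n → ℝ} (hδ : ∀ i, δ i ≤ (u i.succ - u i.castSucc) / 2) :
    Pairwise (Disjoint on Sum.elim (fun i => Set.Ioo (u i.castSucc) (u i.castSucc + δ i))
      (fun i => Set.Ioc (u i.succ - δ i) (u i.succ))) := by
  set I := Sum.elim (fun i => Set.Ioo (u i.castSucc) (u i.castSucc + δ i))
    (fun i => Set.Ioc (u i.succ - δ i) (u i.succ))
  set gap : Fin n ⊕ Fin n → Fin n := Sum.elim id id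
  have hI : ∀ j, I j ⊆ Set.Ioc (u (gap j).castSucc) (u (Order.succ (gap j).castSucc)) := by
    rintro (i | i) x ⟨h₁, h₂⟩ <;> have := hδ i <;> have := hu (Fin.castSucc_le_succ i) <;>
      simp only [gap, Sum.elim_inl, Sum.elim_inr, id, Fin.orderSucc_castSucc] <;>
      constructor <;> linarith
  have hends : ∀ i, Disjoint (I (.inl i)) (I (.inr i)) := fun i =>
    Set.disjoint_left.2 fun x h h' => by linarith [h.2, h'.1, hδ i]
  intro j k hjk
  by_cases hg : gap j = gap k
  · rcases j with i | i <;> rcases k with i' | i' <;>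
      simp only [gap, Sum.elim_inl, Sum.elim_inr, id] at hg <;> subst hg <;>
      simp only [ne_eq, not_true_eq_false] at hjk
    exacts [hends i, (hends i).symm]
  · exact (hu.pairwise_disjoint_on_Ioc_succ fun h => hg (Fin.castSucc_injective _ h)).mono
      (hI j) (hI k)

lemma sum_mul_measureReal_le_of_pairwise_disjoint {Ω ι X : Type*} [MeasurableSpace Ω]
    {μ : Measure Ω} [IsFiniteMeasure μ] [Fintype ι] {F : Finset X} {A : ι → Set Ω}
    {B : X → Set Ω} {φ : ι → X} {w : X → ℝ} (hw : ∀ x ∈ F, 0 ≤ w x) (hφ : ∀ i, φ i ∈ F)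
    (hAB : ∀ i, A i ⊆ B (φ i)) (hA : ∀ i, MeasurableSet (A i))
    (hdisj : Pairwise (Disjoint on A)) :
    ∑ i, w (φ i) * μ.real (A i) ≤ ∑ x ∈ F, w x * μ.real (B x) := by
  classical
  rw [← Finset.sum_fiberwise_of_maps_to (g := φ) (t := F) fun i _ => hφ i]
  refine Finset.sum_le_sum fun x hx => ?_
  calc ∑ i with φ i = x, w (φ i) * μ.real (A i)
      = w x * μ.real (⋃ i ∈ ({i | φ i = x} : Finset ι), A i) := by
        rw [measureReal_biUnion_finset (hdisj.set_pairwise _) fun i _ => hA i, Finset.mul_sum]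
        exact Finset.sum_congr rfl fun i hi => by rw [(Finset.mem_filter.1 hi).2]
    _ ≤ w x * μ.real (B x) := by
        gcongr ?_ * ?_
        · exact hw x hx
        · exact measureReal_mono
            (Set.iUnion₂_subset fun i hi => (Finset.mem_filter.1 hi).2 ▸ hAB i)

namespace AddCircle

variable {ℓ : ℝ}

lemma dist_coe_le_abs_sub (x y : ℝ) : dist (x : AddCircle ℓ) (y : AddCircle ℓ) ≤ |x - y| := by
  rw [dist_eq_norm, ← coe_sub]
  simpa using QuotientAddGroup.norm_mk_le_norm (S := AddSubgroup.zmultiples ℓ) (m := x - y)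

lemma exists_coe_eq_dist_eq_abs_sub (t : ℝ) (y : AddCircle ℓ) :
    ∃ σ : ℝ, (σ : AddCircle ℓ) = y ∧ dist (t : AddCircle ℓ) y = |t - σ| := by
  obtain ⟨σ, rfl⟩ := QuotientAddGroup.mk_surjective y
  refine ⟨σ + round (ℓ⁻¹ * (t - σ)) * ℓ, ?_, ?_⟩
  · rw [coe_add, ← zsmul_eq_mul, coe_zsmul, coe_period, smul_zero, add_zero]
  · rw [show (QuotientAddGroup.mk σ : AddCircle ℓ) = (σ : AddCircle ℓ) from rfl, dist_eq_norm,
      ← coe_sub, norm_eq]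
    ring_nf

lemma haarAddCircle_real_setOf_equivIoc_mem [Fact (0 < ℓ)] (v₀ : ℝ) {S : Set ℝ}
    (hS : MeasurableSet S) (hSv : S ⊆ Set.Ioc v₀ (v₀ + ℓ)) :
    haarAddCircle.real {z : AddCircle ℓ | (equivIoc ℓ v₀ z : ℝ) ∈ S} = volume.real S / ℓ := by
  have hℓ : (0 : ℝ) < ℓ := Fact.out
  have hvol : volume {z : AddCircle ℓ | (equivIoc ℓ v₀ z : ℝ) ∈ S} = volume S := by
    change volume (equivIoc ℓ v₀ ⁻¹' (Subtype.val ⁻¹' S)) = _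
    rw [(measurePreserving_equivIoc ℓ).measure_preimage
      (measurable_subtype_coe hS).nullMeasurableSet, comap_subtype_coe_apply measurableSet_Ioc,
      Subtype.image_preimage_coe, Set.inter_eq_right.2 hSv]
  rw [measureReal_def, measureReal_def, ← hvol, volume_eq_smul_haarAddCircle,
    Measure.smul_apply, smul_eq_mul, ENNReal.toReal_mul, ENNReal.toReal_ofReal hℓ.le,
    mul_div_cancel_left₀ _ hℓ.ne']

end AddCircle

variable {ℓ : ℝ}

lemma measurableSet_voronoi (F : Finset (AddCircle ℓ)) (y : AddCircle ℓ) :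
    MeasurableSet (voronoi ℓ F y) := by
  simp only [voronoi, Set.ofPred_forall]
  exact .biInter F.countable_toSet fun y' _ => .iInter fun _ =>
    measurableSet_lt (by fun_prop) (by fun_prop)

lemma coe_mem_voronoi_of_forall_lift {F : Finset (AddCircle ℓ)} {x t : ℝ}
    (h : ∀ σ : ℝ, (σ : AddCircle ℓ) ∈ F → (σ : AddCircle ℓ) ≠ x → |t - x| < |t - σ|) :
    (t : AddCircle ℓ) ∈ voronoi ℓ F x := by
  intro y hy hyx
  obtain ⟨σ, rfl, hσ⟩ := AddCircle.exists_coe_eq_dist_eq_abs_sub t y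
  rw [hσ]
  exact (AddCircle.dist_coe_le_abs_sub t x).trans_lt (h σ hy hyx)

lemma coe_mem_ball_inter_voronoi_left {F : Finset (AddCircle ℓ)} {p q r t : ℝ}
    (hgap : ∀ σ ∈ Set.Ioo p q, (σ : AddCircle ℓ) ∉ F) (hpt : p ≤ t) (hclose : t - p < q - t)
    (hr : t - p < r) :
    (t : AddCircle ℓ) ∈ Metric.ball (p : AddCircle ℓ) r ∩ voronoi ℓ F p := by
  have htp : |t - p| = t - p := abs_of_nonneg (sub_nonneg.2 hpt)
  refine ⟨(AddCircle.dist_coe_le_abs_sub t p).trans_lt (by rwa [htp]),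
    coe_mem_voronoi_of_forall_lift fun σ hσF hσp => ?_⟩
  have hσ : σ ∉ Set.Ioo p q := fun h => hgap σ h hσF
  rw [htp]
  rcases lt_or_gt_of_ne (fun h : σ = p => hσp (h ▸ rfl)) with h | h
  · exact lt_of_lt_of_le (by linarith) (le_abs_self _)
  · have : q ≤ σ := not_lt.1 fun h' => hσ ⟨h, h'⟩
    exact lt_of_lt_of_le (by linarith) (neg_le_abs _)

lemma coe_mem_ball_inter_voronoi_right {F : Finset (AddCircle ℓ)} {p q r t : ℝ}
    (hgap : ∀ σ ∈ Set.Ioo p q, (σ : AddCircle ℓ) ∉ F) (htq : t ≤ q) (hclose : q - t < t - p)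
    (hr : q - t < r) :
    (t : AddCircle ℓ) ∈ Metric.ball (q : AddCircle ℓ) r ∩ voronoi ℓ F q := by
  have htq' : |t - q| = q - t := by rw [abs_sub_comm, abs_of_nonneg (sub_nonneg.2 htq)]
  refine ⟨(AddCircle.dist_coe_le_abs_sub t q).trans_lt (by rwa [htq']),
    coe_mem_voronoi_of_forall_lift fun σ hσF hσq => ?_⟩
  have hσ : σ ∉ Set.Ioo p q := fun h => hgap σ h hσF
  rw [htq']
  rcases lt_or_gt_of_ne (fun h : σ = q => hσq (h ▸ rfl)) with h | h
  · have : σ ≤ p := not_lt.1 fun h' => hσ ⟨h', h⟩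
    exact lt_of_lt_of_le (by linarith) (le_abs_self _)
  · exact lt_of_lt_of_le (by linarith) (neg_le_abs _)

lemma sum_gap_le_sum_mul_measureReal_ball_inter_voronoi [Fact (0 < ℓ)]
    {F : Finset (AddCircle ℓ)} {n : ℕ} {u : Fin (n + 1) → ℝ} (hu : Monotone u)
    (hlen : u (Fin.last n) ≤ u 0 + ℓ) (huF : ∀ i, (u i : AddCircle ℓ) ∈ F)
    (hgap : ∀ i : Fin n, ∀ σ ∈ Set.Ioo (u i.castSucc) (u i.succ), (σ : AddCircle ℓ) ∉ F)
    {r : ℝ} (hr : 0 ≤ r) {w : AddCircle ℓ → ℝ} (hw : ∀ x, 0 ≤ w x) :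
    ∑ i : Fin n, min ((u i.succ - u i.castSucc) / 2) r *
        (w (u i.castSucc) + w (u i.succ)) / ℓ ≤
      ∑ x ∈ F, w x * AddCircle.haarAddCircle.real (Metric.ball x r ∩ voronoi ℓ F x) := by
  set δ : Fin n → ℝ := fun i => min ((u i.succ - u i.castSucc) / 2) r
  have hδ : ∀ i, 0 ≤ δ i ∧ δ i ≤ (u i.succ - u i.castSucc) / 2 ∧ δ i ≤ r := fun i =>
    ⟨le_min (by linarith [hu (Fin.castSucc_le_succ i)]) hr, min_le_left _ _, min_le_right _ _⟩
  set I : Fin n ⊕ Fin n → Set ℝ := Sum.elim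
    (fun i => Set.Ioo (u i.castSucc) (u i.castSucc + δ i))
    (fun i => Set.Ioc (u i.succ - δ i) (u i.succ))
  set φ : Fin n ⊕ Fin n → AddCircle ℓ := Sum.elim (fun i => (u i.castSucc : AddCircle ℓ))
    (fun i => (u i.succ : AddCircle ℓ))
  set τ : AddCircle ℓ → ℝ := fun z => AddCircle.equivIoc ℓ (u 0) z
  have hI : ∀ j, I j ⊆ Set.Ioc (u 0) (u 0 + ℓ) := by
    rintro (i | i) x ⟨h₁, h₂⟩ <;> obtain ⟨-, hδ₂, -⟩ := hδ i <;>
      have := hu (Fin.zero_le i.castSucc) <;> have := hu (Fin.le_last i.succ) <;>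
      constructor <;> linarith
  have hImeas : ∀ j, MeasurableSet (I j) := by
    rintro (i | i)
    exacts [measurableSet_Ioo, measurableSet_Ioc]
  have hmeas : ∀ j, AddCircle.haarAddCircle.real {z | τ z ∈ I j} =
      δ (Sum.elim id id j) / ℓ := by
    rintro (i | i) <;> rw [AddCircle.haarAddCircle_real_setOf_equivIoc_mem _ (hImeas _) (hI _)] <;>
      simp only [I, Sum.elim_inl, Sum.elim_inr, id]
    · rw [Real.volume_real_Ioo_of_le (by linarith [hδ i]), add_sub_cancel_left]
    · rw [Real.volume_real_Ioc_of_le (by linarith [hδ i]), sub_sub_cancel]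
  have hcell : ∀ j, {z | τ z ∈ I j} ⊆ Metric.ball (φ j) r ∩ voronoi ℓ F (φ j) := by
    rintro (i | i) z hz <;> rw [← AddCircle.coe_equivIoc (p := ℓ) (a := u 0) (y := z)]
    · obtain ⟨h₁, h₂⟩ : τ z ∈ Set.Ioo _ _ := hz
      exact coe_mem_ball_inter_voronoi_left (hgap i) h₁.le (by linarith [hδ i])
        (by linarith [hδ i])
    · obtain ⟨h₁, h₂⟩ : τ z ∈ Set.Ioc _ _ := hz
      exact coe_mem_ball_inter_voronoi_right (hgap i) h₂ (by linarith [hδ i])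
        (by linarith [hδ i])
  calc ∑ i : Fin n, δ i * (w (u i.castSucc) + w (u i.succ)) / ℓ
      = ∑ j, w (φ j) * AddCircle.haarAddCircle.real {z | τ z ∈ I j} := by
        rw [Fintype.sum_sum_type, ← Finset.sum_add_distrib]
        refine Finset.sum_congr rfl fun i _ => ?_
        rw [hmeas, hmeas]
        simp only [φ, Sum.elim_inl, Sum.elim_inr, id]
        ring
    _ ≤ _ := sum_mul_measureReal_le_of_pairwise_disjoint (fun x _ => hw x)
        (by rintro (i | i) <;> exact huF _) hcell
        (fun j => (AddCircle.measurableEquivIoc ℓ (u 0)).measurable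
          (measurable_subtype_coe (hImeas j)))
        fun j k hjk => ((pairwise_disjoint_gapEnds hu fun i => (hδ i).2.1) hjk).preimage τ

lemma exists_monotone_lifts [Fact (0 < ℓ)] {F : Finset (AddCircle ℓ)} {v₀ : ℝ}
    (hv : (v₀ : AddCircle ℓ) ∈ F) :
    ∃ (n : ℕ) (u : Fin (n + 1) → ℝ), Monotone u ∧ u 0 = v₀ ∧ u (Fin.last n) = v₀ + ℓ ∧
      (∀ i, (u i : AddCircle ℓ) ∈ F) ∧
      ∀ i : Fin n, ∀ σ ∈ Set.Ioo (u i.castSucc) (u i.succ), (σ : AddCircle ℓ) ∉ F := by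
  have hℓ : (0 : ℝ) < ℓ := Fact.out
  have hfin : {s ∈ Set.Icc v₀ (v₀ + ℓ) | (s : AddCircle ℓ) ∈ F}.Finite := by
    refine (((F : Set (AddCircle ℓ)).toFinite.image
      fun z => (AddCircle.equivIoc ℓ v₀ z : ℝ)).insert v₀).subset ?_
    rintro s ⟨hs, hsF⟩
    rcases hs.1.eq_or_lt with rfl | h
    · exact Set.mem_insert _ _
    · exact Set.mem_insert_of_mem _ ⟨_, hsF, AddCircle.equivIoc_coe_of_mem ⟨h, hs.2⟩⟩
  set G := hfin.toFinset
  have hG : ∀ s, s ∈ G ↔ s ∈ Set.Icc v₀ (v₀ + ℓ) ∧ (s : AddCircle ℓ) ∈ F := fun s => by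
    simp [G]
  have hv₀ : v₀ ∈ G := (hG _).2 ⟨⟨le_rfl, by linarith⟩, hv⟩
  have hvℓ : v₀ + ℓ ∈ G := (hG _).2 ⟨⟨by linarith, le_rfl⟩, by rwa [AddCircle.coe_add_period]⟩
  obtain ⟨n, hn⟩ : ∃ n, G.card = n + 1 :=
    Nat.exists_eq_succ_of_ne_zero (Finset.card_ne_zero.2 ⟨_, hv₀⟩)
  set u := G.orderEmbOfFin hn
  have huG : ∀ i, u i ∈ Set.Icc v₀ (v₀ + ℓ) ∧ (u i : AddCircle ℓ) ∈ F :=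
    fun i => (hG _).1 (G.orderEmbOfFin_mem hn i)
  refine ⟨n, u, u.monotone, ?_, ?_, fun i => (huG i).2, fun i σ hσ hσF =>
    G.notMem_Ioo_orderEmbOfFin hn i ((hG σ).2 ⟨⟨?_, ?_⟩, hσF⟩) hσ⟩
  · refine (G.orderEmbOfFin_zero hn n.succ_pos : u 0 = _).trans ?_
    exact le_antisymm (G.min'_le _ hv₀) (G.le_min' _ _ fun s hs => ((hG s).1 hs).1.1)
  · refine (G.orderEmbOfFin_last hn n.succ_pos : u (Fin.last n) = _).trans ?_
    exact le_antisymm (G.max'_le _ _ fun s hs => ((hG s).1 hs).1.2) (G.le_max' _ hvℓ)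
  · linarith [hσ.1, (huG i.castSucc).1.1]
  · linarith [hσ.2, (huG i.succ).1.2]

lemma liftWeight_sub_le_max_sub_dist {a v₀ s : ℝ} (haℓ : a ≤ ℓ / 2)
    (hs : s ∈ Set.Icc v₀ (v₀ + ℓ)) :
    liftWeight a ℓ (s - v₀) ≤ max (a - dist (s : AddCircle ℓ) (v₀ : AddCircle ℓ)) 0 := by
  refine liftWeight_le_of_le haℓ ?_ ?_
  · simpa [abs_of_nonneg (sub_nonneg.2 hs.1)] using AddCircle.dist_coe_le_abs_sub (ℓ := ℓ) s v₀
  · have := AddCircle.dist_coe_le_abs_sub (ℓ := ℓ) s (v₀ + ℓ)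
    rw [AddCircle.coe_add_period, abs_of_nonpos (by linarith [hs.2])] at this
    linarith

theorem sq_div_le_sum_mul_measureReal_ball_inter_voronoi [Fact (0 < ℓ)] {a r : ℝ} (ha : 0 ≤ a)
    (haℓ : a ≤ ℓ / 2) (har : a ≤ 2 * r) {F : Finset (AddCircle ℓ)} {v : AddCircle ℓ}
    (hv : v ∈ F) :
    a ^ 2 / ℓ ≤ ∑ x ∈ F, max (a - dist x v) 0 *
      AddCircle.haarAddCircle.real (Metric.ball x r ∩ voronoi ℓ F x) := by
  have hℓ : (0 : ℝ) < ℓ := Fact.out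
  obtain ⟨v₀, rfl⟩ : ∃ v₀ : ℝ, (v₀ : AddCircle ℓ) = v := QuotientAddGroup.mk_surjective v
  obtain ⟨n, u, hu, hu0, hulast, huF, hgap⟩ := exists_monotone_lifts hv
  have huIcc : ∀ i, u i ∈ Set.Icc v₀ (v₀ + ℓ) :=
    fun i => ⟨hu0 ▸ hu (Fin.zero_le i), hulast ▸ hu (Fin.le_last i)⟩
  set H := fun s => liftWeightPrimitive a ℓ (s - v₀)
  calc a ^ 2 / ℓ = ∑ i : Fin n, (H (u i.succ) - H (u i.castSucc)) / ℓ := by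
        rw [← Finset.sum_div, Fin.sum_succ_sub_castSucc (fun i => H (u i)), hu0, hulast]
        simp only [H, add_sub_cancel_left, sub_self]
        rw [liftWeightPrimitive_self_sub_zero ha (by linarith)]
    _ ≤ ∑ i : Fin n, min ((u i.succ - u i.castSucc) / 2) r *
          (max (a - dist (u i.castSucc : AddCircle ℓ) v₀) 0 +
            max (a - dist (u i.succ : AddCircle ℓ) v₀) 0) / ℓ := by
        gcongr with i
        have hmono := hu (Fin.castSucc_le_succ i)
        calc H (u i.succ) - H (u i.castSucc)
            ≤ min ((u i.succ - u i.castSucc) / 2) r *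
                (liftWeight a ℓ (u i.castSucc - v₀) + liftWeight a ℓ (u i.succ - v₀)) := by
              have := liftWeightPrimitive_sub_le (ℓ := ℓ) ha har
                (sub_nonneg.2 (huIcc i.castSucc).1) (sub_le_sub_right hmono v₀)
                (by linarith [(huIcc i.succ).2])
              rwa [sub_sub_sub_cancel_right] at this
          _ ≤ _ := by
              gcongr
              · exact le_min (by linarith) (by linarith)
              · exact liftWeight_sub_le_max_sub_dist haℓ (huIcc _)
              · exact liftWeight_sub_le_max_sub_dist haℓ (huIcc _)
    _ ≤ _ := sum_gap_le_sum_mul_measureReal_ball_inter_voronoi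
        (w := fun x => max (a - dist x v₀) 0) hu (by rw [hu0, hulast]) huF hgap (by linarith)
        fun x => le_max_right _ _

/-- `potential ℓ a ζ x` is `⟨ζ, δₓ⟩ₐ`. -/
noncomputable def potential (ℓ a : ℝ) (ζ : AddCircle ℓ →₀ ℕ) (x : AddCircle ℓ) : ℝ :=
  ∑ y ∈ ζ.support, (ζ y : ℝ) * max (a - dist x y) 0

lemma quada_nonneg (a : ℝ) (ζ : AddCircle ℓ →₀ ℕ) : 0 ≤ quada ℓ a ζ := by
  unfold quada
  positivity

lemma quada_eq_sum_potential (a : ℝ) (ζ : AddCircle ℓ →₀ ℕ) :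
    quada ℓ a ζ = ζ.sum fun x m => (m : ℝ) * potential ℓ a ζ x := by
  simp only [quada, potential, Finsupp.sum, Finset.mul_sum, mul_assoc]

lemma potential_add (a : ℝ) (ξ η : AddCircle ℓ →₀ ℕ) (x : AddCircle ℓ) :
    potential ℓ a (ξ + η) x = potential ℓ a ξ x + potential ℓ a η x :=
  Finsupp.sum_add_index' (h := fun y (m : ℕ) => (m : ℝ) * max (a - dist x y) 0) (by simp)
    fun _ _ _ => by push_cast; ring

lemma potential_single (a : ℝ) (x y : AddCircle ℓ) :
    potential ℓ a (Finsupp.single y 1) x = max (a - dist x y) 0 := by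
  simp [potential]

lemma quada_add_single {a : ℝ} (ha : 0 ≤ a) (ξ : AddCircle ℓ →₀ ℕ) (x : AddCircle ℓ) :
    quada ℓ a (ξ + Finsupp.single x 1) = quada ℓ a ξ + 2 * potential ℓ a ξ x + a := by
  rw [quada_eq_sum_potential, Finsupp.sum_add_index' (by simp) fun _ _ _ => by push_cast; ring,
    Finsupp.sum_single_index (by simp), quada_eq_sum_potential]
  have hsymm : (ξ.sum fun y m => (m : ℝ) * max (a - dist y x) 0) = potential ℓ a ξ x := by
    simp only [potential, Finsupp.sum, dist_comm]
  simp only [potential_add, potential_single, mul_add, Finsupp.sum_add, hsymm, dist_self,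
    sub_zero, max_eq_left ha, Nat.cast_one]
  ring

lemma quada_sub_single {a : ℝ} (ha : 0 ≤ a) {ζ : AddCircle ℓ →₀ ℕ} {x : AddCircle ℓ}
    (hx : x ∈ ζ.support) :
    quada ℓ a (ζ - Finsupp.single x 1) = quada ℓ a ζ - 2 * potential ℓ a ζ x + a := by
  obtain ⟨ξ, rfl⟩ : ∃ ξ, ζ = ξ + Finsupp.single x 1 :=
    ⟨ζ - Finsupp.single x 1, (tsub_add_cancel_of_le (Finsupp.single_le_iff.2
      (Nat.one_le_iff_ne_zero.2 (Finsupp.mem_support_iff.1 hx)))).symm⟩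
  rw [add_tsub_cancel_right, quada_add_single ha, potential_add, potential_single, dist_self,
    sub_zero, max_eq_left ha]
  ring

lemma sq_div_mul_sum_le_sum_potential_mul [Fact (0 < ℓ)] {a r : ℝ} (ha : 0 ≤ a)
    (haℓ : a ≤ ℓ / 2) (har : a ≤ 2 * r) (ζ : AddCircle ℓ →₀ ℕ) :
    a ^ 2 / ℓ * ∑ y ∈ ζ.support, (ζ y : ℝ) ≤ ∑ x ∈ ζ.support, potential ℓ a ζ x *
      AddCircle.haarAddCircle.real (Metric.ball x r ∩ voronoi ℓ ζ.support x) := by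
  simp only [potential, Finset.sum_mul, Finset.mul_sum]
  rw [Finset.sum_comm]
  gcongr with y hy
  calc a ^ 2 / ℓ * ζ y ≤ ζ y * ∑ x ∈ ζ.support, max (a - dist x y) 0 *
        AddCircle.haarAddCircle.real (Metric.ball x r ∩ voronoi ℓ ζ.support x) := by
        rw [mul_comm]
        gcongr
        exact sq_div_le_sum_mul_measureReal_ball_inter_voronoi ha haℓ har hy
    _ = _ := by
        rw [Finset.mul_sum]
        exact Finset.sum_congr rfl fun x _ => by ring

lemma sum_measureReal_ball_inter_voronoi_le [Fact (0 < ℓ)] (F : Finset (AddCircle ℓ)) (r : ℝ) :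
    ∑ x ∈ F, AddCircle.haarAddCircle.real (Metric.ball x r ∩ voronoi ℓ F x) ≤
      AddCircle.haarAddCircle.real (⋃ x ∈ F, Metric.ball x r) := by
  rw [← measureReal_biUnion_finset (fun x hx y hy hxy => Set.disjoint_left.2 fun z hzx hzy =>
      lt_asymm (hzx.2 y hy hxy.symm) (hzy.2 x hx hxy))
    fun x _ => Metric.isOpen_ball.measurableSet.inter (measurableSet_voronoi F x)]
  exact measureReal_mono (Set.iUnion₂_mono fun x _ => Set.inter_subset_left) (measure_ne_top _ _)

/-- Polling decreases the quadratic functional: for `0 < a ≤ min(ℓ/2, 2r)`,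
`A_p h(ζ) ≤ h(ζ) + a - 2(a²/ℓ)·ζ(S)` where
`A_p h(ζ) = h(ζ)(1 - k_r(ζ)) + ∑_{x ∈ ζ} h(ζ - δ_x)·m(B_r(x) ∩ Γ_ζ(x))` and
`k_r(ζ) = m(⋃_{x ∈ ζ} B_r(x))`, `m` being the normalized Haar measure on the circle. -/
theorem polling_decreases_quadratic (ℓ : ℝ) [Fact (0 < ℓ)] (a r : ℝ) (ha : 0 < a)
    (haℓ : a ≤ ℓ / 2) (har : a ≤ 2 * r) (ζ : AddCircle ℓ →₀ ℕ) :
    quada ℓ a ζ *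
        (1 - (AddCircle.haarAddCircle (⋃ x ∈ ζ.support, Metric.ball x r)).toReal)
      + ∑ x ∈ ζ.support, quada ℓ a (ζ - Finsupp.single x 1) *
          (AddCircle.haarAddCircle (Metric.ball x r ∩ voronoi ℓ ζ.support x)).toReal
      ≤ quada ℓ a ζ + a - 2 * (a ^ 2 / ℓ) * (∑ x ∈ ζ.support, (ζ x : ℝ)) := by
  simp only [← measureReal_def]
  set μ : AddCircle ℓ → ℝ :=
    fun x => AddCircle.haarAddCircle.real (Metric.ball x r ∩ voronoi ℓ ζ.support x)
  have hsplit : ∑ x ∈ ζ.support, quada ℓ a (ζ - Finsupp.single x 1) * μ x =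
      (quada ℓ a ζ + a) * ∑ x ∈ ζ.support, μ x - 2 * ∑ x ∈ ζ.support, potential ℓ a ζ x * μ x := by
    rw [Finset.mul_sum, Finset.mul_sum, ← Finset.sum_sub_distrib]
    exact Finset.sum_congr rfl fun x hx => by rw [quada_sub_single ha.le hx]; ring
  have hcells : ∑ x ∈ ζ.support, μ x ≤
      AddCircle.haarAddCircle.real (⋃ x ∈ ζ.support, Metric.ball x r) :=
    sum_measureReal_ball_inter_voronoi_le ζ.support r
  have hunion : AddCircle.haarAddCircle.real (⋃ x ∈ ζ.support, Metric.ball x r) ≤ 1 :=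
    measureReal_le_one
  have hinterp := sq_div_mul_sum_le_sum_potential_mul ha.le haℓ har ζ
  rw [hsplit]
  linarith [mul_le_mul_of_nonneg_left hcells (quada_nonneg a ζ),
    mul_le_mul_of_nonneg_left (hcells.trans hunion) ha.le]
end
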